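/- arXiv:2401.10141 — 6 statements merged into one kernel-verified Lean document; each statement's English description precedes it below -/
import Mathlib

section
/- Let a : I → ℝ be continuous with a(x) ≥ a₀ > 0 and a ∈ W^{1,∞}(I), f ∈ C(I), and let φ ∈ C²(I) solve ε²φ'' + a φ = f on I = [ξ,η] with φ(ξ) = φ̂₀ and εφ'(ξ) = φ̂₁. Then there exists a constant C > 0 independent of ε, f, φ̂₀, φ̂₁ such that ‖φ‖_{L^∞(I)} ≤ (C/ε)‖f‖_{L²(I)} + C(|φ̂₁| + |φ̂₀|). -/
open Set intervalIntegral

lemma gronwall_aux (ξ η K : ℝ) (hK : 0 ≤ K) (E E' h : ℝ → ℝ)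
    (hE : ∀ x ∈ Icc ξ η, HasDerivAt E (E' x) x)
    (hh : Continuous h) (hh0 : ∀ x, 0 ≤ h x)
    (hEξ : 0 ≤ E ξ)
    (hle : ∀ x ∈ Icc ξ η, E' x ≤ K * E x + h x) :
    ∀ x ∈ Icc ξ η, E x ≤ Real.exp (K * (η - ξ)) * (E ξ + ∫ s in ξ..η, h s) := by
  set G : ℝ → ℝ := fun x => Real.exp (-K * (x - ξ)) * E x - ∫ s in ξ..x, Real.exp (-K * (s - ξ)) * h s with hG
  have hcont : Continuous fun s => Real.exp (-K * (s - ξ)) * h s := by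
    exact (Real.continuous_exp.comp (by continuity)).mul hh
  have hGd : ∀ x ∈ Icc ξ η, HasDerivAt G
      ((-K * Real.exp (-K * (x - ξ))) * E x + Real.exp (-K * (x - ξ)) * E' x
        - Real.exp (-K * (x - ξ)) * h x) x := by
    intro x hx
    have h1 : HasDerivAt (fun x => Real.exp (-K * (x - ξ))) (-K * Real.exp (-K * (x - ξ))) x := by
      have := (Real.hasDerivAt_exp (-K * (x - ξ))).comp x
        (((hasDerivAt_id x).sub_const ξ).const_mul (-K))
      simpa [mul_comm, Function.comp_def] using this
    have h2 : HasDerivAt (fun x => ∫ s in ξ..x, Real.exp (-K * (s - ξ)) * h s)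
        (Real.exp (-K * (x - ξ)) * h x) x :=
      intervalIntegral.integral_hasDerivAt_right (hcont.intervalIntegrable _ _)
        (hcont.stronglyMeasurableAtFilter _ _) hcont.continuousAt
    exact ((h1.mul (hE x hx)).sub h2)
  have hGc : ContinuousOn G (Icc ξ η) := fun x hx => ((hGd x hx).continuousAt).continuousWithinAt
  have hanti : AntitoneOn G (Icc ξ η) := by
    apply antitoneOn_of_deriv_nonpos (convex_Icc ξ η) hGc
    · intro x hx
      rw [interior_Icc] at hx
      exact ((hGd x (Ioo_subset_Icc_self hx)).differentiableAt).differentiableWithinAt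
    · intro x hx
      rw [interior_Icc] at hx
      rw [(hGd x (Ioo_subset_Icc_self hx)).deriv]
      have hx' := Ioo_subset_Icc_self hx
      have := hle x hx'
      have hexp : 0 < Real.exp (-K * (x - ξ)) := Real.exp_pos _
      nlinarith [hle x hx', Real.exp_pos (-K * (x - ξ))]
  intro x hx
  have hGle : G x ≤ G ξ := hanti (left_mem_Icc.2 (le_trans hx.1 hx.2)) hx hx.1
  have hGξ : G ξ = E ξ := by simp [hG]
  -- unfold
  have hIle : (∫ s in ξ..x, Real.exp (-K * (s - ξ)) * h s) ≤ ∫ s in ξ..η, h s := by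
    have h1 : (∫ s in ξ..x, Real.exp (-K * (s - ξ)) * h s) ≤ ∫ s in ξ..x, h s := by
      apply intervalIntegral.integral_mono_on hx.1 (hcont.intervalIntegrable _ _)
        (hh.intervalIntegrable _ _)
      intro s hs
      have : Real.exp (-K * (s - ξ)) ≤ 1 := by
        apply Real.exp_le_one_iff.2
        nlinarith [hs.1]
      nlinarith [hh0 s]
    have h2 : (∫ s in ξ..x, h s) ≤ ∫ s in ξ..η, h s := by
      apply intervalIntegral.integral_mono_interval le_rfl hx.1 hx.2
        (Filter.Eventually.of_forall fun s => hh0 s) (hh.intervalIntegrable _ _)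
    linarith
  have key : Real.exp (-K * (x - ξ)) * E x ≤ E ξ + ∫ s in ξ..η, h s := by
    have := hGle.trans_eq hGξ
    simp only [hG] at this
    linarith
  have hpos : 0 ≤ E ξ + ∫ s in ξ..η, h s := by
    have : 0 ≤ ∫ s in ξ..η, h s :=
      intervalIntegral.integral_nonneg (hx.1.trans hx.2) fun s _ => hh0 s
    linarith
  calc E x = Real.exp (K * (x - ξ)) * (Real.exp (-K * (x - ξ)) * E x) := by
        rw [← mul_assoc, ← Real.exp_add]
        ring_nf
        simp
    _ ≤ Real.exp (K * (x - ξ)) * (E ξ + ∫ s in ξ..η, h s) := by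
        apply mul_le_mul_of_nonneg_left key (Real.exp_pos _).le
    _ ≤ Real.exp (K * (η - ξ)) * (E ξ + ∫ s in ξ..η, h s) := by
        apply mul_le_mul_of_nonneg_right _ hpos
        apply Real.exp_le_exp.2
        nlinarith [hx.2]

lemma sqrt_add_le' {x y : ℝ} (hx : 0 ≤ x) (hy : 0 ≤ y) :
    Real.sqrt (x + y) ≤ Real.sqrt x + Real.sqrt y := by
  rw [show Real.sqrt x + Real.sqrt y = Real.sqrt ((Real.sqrt x + Real.sqrt y)^2) from
    (Real.sqrt_sq (by positivity)).symm]
  apply Real.sqrt_le_sqrt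
  nlinarith [Real.sq_sqrt hx, Real.sq_sqrt hy, Real.sqrt_nonneg x, Real.sqrt_nonneg y]

lemma normsq_hasDerivAt {g : ℝ → ℂ} {g' : ℂ} {x : ℝ} (h : HasDerivAt g g' x) :
    HasDerivAt (fun t => ‖g t‖^2) (2 * (inner ℝ (g x) g' : ℝ)) x := by
  have h2 := h.inner ℝ h
  have : (fun t => (inner ℝ (g t) (g t) : ℝ)) = fun t => ‖g t‖^2 := by
    funext t; exact real_inner_self_eq_norm_sq _
  rw [this] at h2
  refine h2.congr_deriv ?_
  rw [real_inner_comm (g x) g']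
  ring
set_option maxHeartbeats 4000000 in
/-- A priori L^∞ estimate for the solution of the inhomogeneous Schrödinger IVP
    ε²φ'' + aφ = f, φ(ξ) = φa, εφ'(ξ) = φb, with a Lipschitz and bounded below
    by a₀ > 0. The constant C is independent of ε, f, φa, φb. -/
theorem apriori_estimate_sup_phi
    (ξ η : ℝ) (hξη : ξ < η) (a : ℝ → ℝ) (a₀ L : ℝ) (ha₀ : 0 < a₀)
    (ha : ∀ x ∈ Icc ξ η, a₀ ≤ a x)
    (haLip : LipschitzOnWith (Real.toNNReal L) a (Icc ξ η)) :
    ∃ C > 0, ∀ (ε : ℝ), 0 < ε → ε ≤ 1 →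
      ∀ (f φ φ' φ'' : ℝ → ℂ) (φa φb : ℂ),
        ContinuousOn f (Icc ξ η) →
        (∀ x ∈ Icc ξ η, HasDerivAt φ (φ' x) x) →
        (∀ x ∈ Icc ξ η, HasDerivAt φ' (φ'' x) x) →
        (∀ x ∈ Icc ξ η, (ε : ℂ)^2 * φ'' x + (a x : ℂ) * φ x = f x) →
        φ ξ = φa → (ε : ℂ) * φ' ξ = φb →
        ∀ x ∈ Icc ξ η,
          ‖φ x‖ ≤ (C / ε) * Real.sqrt (∫ s in ξ..η, ‖f s‖^2)
                    + C * (‖φb‖ + ‖φa‖) := by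
  obtain ⟨aE, haELip, hEqOn⟩ := haLip.extend_real
  obtain ⟨LR, hLR⟩ : ∃ w : ℝ, w = (Real.toNNReal L : ℝ) := ⟨_, rfl⟩
  have hLR0 : 0 ≤ LR := by rw [hLR]; exact (Real.toNNReal L).2
  obtain ⟨c, hc⟩ : ∃ w : ℝ, w = a₀ / (2 * LR + 2) := ⟨_, rfl⟩
  have hc0 : 0 < c := by rw [hc]; positivity
  have hLRc : LR * c ≤ a₀ / 2 := by
    have h2 : (0:ℝ) < 2 * LR + 2 := by positivity
    have h3 : LR * c = (LR * a₀) / (2 * LR + 2) := by rw [hc]; ring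
    rw [h3, div_le_div_iff₀ h2 two_pos]
    nlinarith
  obtain ⟨K, hK⟩ : ∃ w : ℝ, w = 1 + LR * c + (LR * c + LR) * (2 / a₀) := ⟨_, rfl⟩
  have hK0 : 0 ≤ K := by rw [hK]; positivity
  obtain ⟨M, hM⟩ : ∃ w : ℝ, w = Real.exp (K * (η - ξ)) := ⟨_, rfl⟩
  have hM0 : 0 < M := by rw [hM]; exact Real.exp_pos _
  obtain ⟨A, hA⟩ : ∃ w : ℝ, w = a ξ + a₀ := ⟨_, rfl⟩
  have hA0 : 0 < A := by
    have := ha ξ (left_mem_Icc.2 hξη.le); rw [hA]; linarith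
  refine ⟨Real.sqrt (2 * M / a₀) * (1 + Real.sqrt A), by positivity, ?_⟩
  intro ε hε hε1 f φ φ' φ'' φa φb hf hφ hφ' heq hφa hφb
  obtain ⟨δ, hδ⟩ : ∃ w : ℝ, w = c * ε := ⟨_, rfl⟩
  have hδ0 : 0 < δ := by rw [hδ]; positivity
  -- the mollified coefficient
  obtain ⟨b, hb⟩ : ∃ w : ℝ → ℝ, w = fun x => δ⁻¹ * ∫ s in x..(x + δ), aE s := ⟨_, rfl⟩
  have haEc : Continuous aE := haELip.continuous
  have hbd : ∀ x : ℝ, HasDerivAt b (δ⁻¹ * (aE (x + δ) - aE x)) x := by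
    intro x
    have h1 : ∀ y : ℝ, HasDerivAt (fun t => ∫ s in (0:ℝ)..t, aE s) (aE y) y := fun y =>
      intervalIntegral.integral_hasDerivAt_right (haEc.intervalIntegrable _ _)
        (haEc.stronglyMeasurableAtFilter _ _) haEc.continuousAt
    have h2 : HasDerivAt (fun t => ∫ s in t..(t + δ), aE s) (aE (x + δ) - aE x) x := by
      have h3 : HasDerivAt (fun t => (∫ s in (0:ℝ)..(t + δ), aE s) - ∫ s in (0:ℝ)..t, aE s)
          (aE (x + δ) - aE x) x := by
        have h4 : HasDerivAt (fun t : ℝ => t + δ) 1 x := (hasDerivAt_id x).add_const δ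
        have h5 := (h1 (x + δ)).comp x h4
        simpa [Function.comp_def, Pi.sub_def] using h5.sub (h1 x)
      have : (fun t => (∫ s in (0:ℝ)..(t + δ), aE s) - ∫ s in (0:ℝ)..t, aE s)
          = fun t => ∫ s in t..(t + δ), aE s := by
        funext t
        rw [← intervalIntegral.integral_add_adjacent_intervals
          (haEc.intervalIntegrable 0 t) (haEc.intervalIntegrable t (t + δ))]
        ring
      rwa [this] at h3
    simpa [hb] using h2.const_mul δ⁻¹
  have hb'bd : ∀ x : ℝ, |δ⁻¹ * (aE (x + δ) - aE x)| ≤ LR := by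
    intro x
    have := haELip.dist_le_mul (x + δ) x
    rw [Real.dist_eq, Real.dist_eq, ← hLR] at this
    simp only [add_sub_cancel_left, abs_of_pos hδ0] at this
    rw [abs_mul, abs_inv, abs_of_pos hδ0]
    rw [inv_mul_le_iff₀ hδ0]
    calc |aE (x + δ) - aE x| ≤ LR * δ := this
      _ = δ * LR := mul_comm _ _
  have hba : ∀ x ∈ Icc ξ η, |b x - a x| ≤ LR * δ := by
    intro x hx
    have hax : a x = aE x := hEqOn hx
    have key : |(∫ s in x..(x + δ), aE s) - δ * aE x| ≤ LR * δ * δ := by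
      have : (∫ s in x..(x + δ), aE s) - δ * aE x = ∫ s in x..(x + δ), (aE s - aE x) := by
        rw [intervalIntegral.integral_sub (haEc.intervalIntegrable _ _)
          (intervalIntegrable_const)]
        simp [mul_comm]
      rw [this]
      have := intervalIntegral.norm_integral_le_of_norm_le_const
        (C := LR * δ) (f := fun s => aE s - aE x) (a := x) (b := x + δ) ?_
      · rw [Real.norm_eq_abs] at this
        calc |∫ s in x..(x + δ), (aE s - aE x)| ≤ LR * δ * |x + δ - x| := this
          _ = LR * δ * δ := by rw [show x + δ - x = δ by ring, abs_of_pos hδ0]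
      · intro s hs
        rw [Set.uIoc_of_le (by linarith : x ≤ x + δ)] at hs
        have h1 := haELip.dist_le_mul s x
        rw [Real.dist_eq, Real.dist_eq, ← hLR] at h1
        rw [Real.norm_eq_abs]
        calc |aE s - aE x| ≤ LR * |s - x| := h1
          _ ≤ LR * δ := by
            apply mul_le_mul_of_nonneg_left _ hLR0
            rw [abs_of_nonneg (by linarith [hs.1] : (0:ℝ) ≤ s - x)]
            linarith [hs.2]
    have : b x - a x = δ⁻¹ * ((∫ s in x..(x + δ), aE s) - δ * aE x) := by
      rw [hb, hax]; field_simp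
    rw [this, abs_mul, abs_inv, abs_of_pos hδ0, inv_mul_le_iff₀ hδ0]
    calc |(∫ s in x..(x + δ), aE s) - δ * aE x| ≤ LR * δ * δ := key
      _ = δ * (LR * δ) := by ring
  have hLRδ : LR * δ ≤ a₀ / 2 := by
    calc LR * δ = LR * c * ε := by rw [hδ]; ring
      _ ≤ LR * c := by nlinarith [mul_nonneg hLR0 hc0.le]
      _ ≤ a₀ / 2 := hLRc
  have hblb : ∀ x ∈ Icc ξ η, a₀ / 2 ≤ b x := by
    intro x hx
    have h1 := hba x hx
    have h2 := ha x hx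
    have := abs_le.1 h1
    linarith [this.1]
  have hbξ : b ξ ≤ A := by
    have h1 := hba ξ (left_mem_Icc.2 hξη.le)
    have := abs_le.1 h1
    rw [hA]; linarith [this.2]
  -- extended f
  obtain ⟨fE, hfE⟩ : ∃ w : ℝ → ℂ, w = fun s => f ((projIcc ξ η hξη.le s : ℝ)) := ⟨_, rfl⟩
  have hfEc : Continuous fE := hfE ▸ hf.comp_continuous
    (continuous_subtype_val.comp (continuous_projIcc)) (fun s => (projIcc ξ η hξη.le s).2)
  have hfEeq : ∀ s ∈ Icc ξ η, fE s = f s := fun s hs => by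
    rw [hfE]; simp only []; rw [projIcc_of_mem hξη.le hs]
  obtain ⟨h, hh⟩ : ∃ w : ℝ → ℝ, w = fun s => (ε^2)⁻¹ * ‖fE s‖^2 := ⟨_, rfl⟩
  have hhc : Continuous h := hh ▸ continuous_const.mul ((hfEc.norm).pow 2)
  have hh0 : ∀ s, 0 ≤ h s := fun s => by rw [hh]; positivity
  obtain ⟨E, hE⟩ : ∃ w : ℝ → ℝ, w = fun x => ε^2 * ‖φ' x‖^2 + b x * ‖φ x‖^2 := ⟨_, rfl⟩
  set E' : ℝ → ℝ := fun x => ε^2 * (2 * (inner ℝ (φ' x) (φ'' x) : ℝ))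
      + ((δ⁻¹ * (aE (x + δ) - aE x)) * ‖φ x‖^2
        + b x * (2 * (inner ℝ (φ x) (φ' x) : ℝ))) with hE'
  have hEd : ∀ x ∈ Icc ξ η, HasDerivAt E (E' x) x := by
    intro x hx
    rw [hE, hE']
    simp only []
    have h1 := normsq_hasDerivAt (hφ' x hx)
    have h2 := normsq_hasDerivAt (hφ x hx)
    exact (h1.const_mul (ε^2)).add ((hbd x).mul h2)
  have hle : ∀ x ∈ Icc ξ η, E' x ≤ K * E x + h x := by
    intro x hx
    have heqx := heq x hx
    have hinner : ε^2 * (inner ℝ (φ' x) (φ'' x) : ℝ)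
        = (inner ℝ (φ' x) (f x) : ℝ) - a x * (inner ℝ (φ' x) (φ x) : ℝ) := by
      have e1 : ((ε:ℂ)^2) * φ'' x = (ε^2 : ℝ) • φ'' x := by
        rw [Complex.real_smul]; push_cast; ring
      have e2 : ((a x : ℂ)) * φ x = (a x : ℝ) • φ x := (Complex.real_smul).symm
      have e3 : ((ε:ℂ)^2) * φ'' x = f x - (a x:ℂ) * φ x := by
        rw [← heqx]; ring
      calc ε^2 * (inner ℝ (φ' x) (φ'' x) : ℝ)
          = (inner ℝ (φ' x) ((ε^2:ℝ) • φ'' x) : ℝ) := (real_inner_smul_right _ _ _).symm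
        _ = (inner ℝ (φ' x) (f x - (a x:ℂ) * φ x) : ℝ) := by rw [← e1, e3]
        _ = (inner ℝ (φ' x) (f x) : ℝ) - (inner ℝ (φ' x) ((a x:ℝ) • φ x) : ℝ) := by
            rw [inner_sub_right, e2]
        _ = (inner ℝ (φ' x) (f x) : ℝ) - a x * (inner ℝ (φ' x) (φ x) : ℝ) := by
            rw [real_inner_smul_right]
    have hcomm : (inner ℝ (φ' x) (φ x) : ℝ) = (inner ℝ (φ x) (φ' x) : ℝ) := real_inner_comm _ _
    have hE'eq : E' x = 2 * (inner ℝ (φ' x) (f x) : ℝ)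
        + 2 * (b x - a x) * (inner ℝ (φ x) (φ' x) : ℝ)
        + (δ⁻¹ * (aE (x + δ) - aE x)) * ‖φ x‖^2 := by
      simp only [hE']
      linear_combination 2 * hinner - 2 * (a x) * hcomm
    have hI1 : |(inner ℝ (φ' x) (f x) : ℝ)| ≤ ‖φ' x‖ * ‖f x‖ := abs_real_inner_le_norm _ _
    have hI2 : |(inner ℝ (φ x) (φ' x) : ℝ)| ≤ ‖φ x‖ * ‖φ' x‖ := abs_real_inner_le_norm _ _
    have hbax : |b x - a x| ≤ LR * c * ε := by
      have := hba x hx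
      calc |b x - a x| ≤ LR * δ := this
        _ = LR * c * ε := by rw [hδ]; ring
    have hb'x := hb'bd x
    have hbl := hblb x hx
    have hwx : h x = (ε^2)⁻¹ * ‖f x‖^2 := by rw [hh]; simp only []; rw [hfEeq x hx]
    have key1 : 2 * (inner ℝ (φ' x) (f x) : ℝ) ≤ ε^2 * ‖φ' x‖^2 + (ε^2)⁻¹ * ‖f x‖^2 := by
      have hq : ε^2 * ‖φ' x‖^2 + (ε^2)⁻¹ * ‖f x‖^2 - 2 * (‖φ' x‖ * ‖f x‖)
          = (ε^2 * ‖φ' x‖ - ‖f x‖)^2 / ε^2 := by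
        field_simp; ring
      have hD := div_nonneg (sq_nonneg (ε^2 * ‖φ' x‖ - ‖f x‖)) (by positivity : (0:ℝ) ≤ ε^2)
      linarith [(abs_le.1 hI1).2]
    have key2 : 2 * (b x - a x) * (inner ℝ (φ x) (φ' x) : ℝ)
        ≤ LR * c * (‖φ x‖^2 + ε^2 * ‖φ' x‖^2) := by
      have h2 : (b x - a x) * (inner ℝ (φ x) (φ' x) : ℝ) ≤ (LR * c * ε) * (‖φ x‖ * ‖φ' x‖) := by
        calc (b x - a x) * (inner ℝ (φ x) (φ' x) : ℝ)
            ≤ |(b x - a x) * (inner ℝ (φ x) (φ' x) : ℝ)| := le_abs_self _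
          _ = |b x - a x| * |(inner ℝ (φ x) (φ' x) : ℝ)| := abs_mul _ _
          _ ≤ (LR * c * ε) * (‖φ x‖ * ‖φ' x‖) :=
              mul_le_mul hbax hI2 (abs_nonneg _) (by positivity)
      nlinarith [sq_nonneg (‖φ x‖ - ε * ‖φ' x‖), mul_nonneg hLR0 hc0.le,
        mul_nonneg (mul_nonneg hLR0 hc0.le) (sq_nonneg (‖φ x‖ - ε * ‖φ' x‖))]
    have key3 : (δ⁻¹ * (aE (x + δ) - aE x)) * ‖φ x‖^2 ≤ LR * ‖φ x‖^2 := by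
      nlinarith [abs_le.1 hb'x, sq_nonneg ‖φ x‖]
    have hKb : LR * c + LR ≤ K * (a₀ / 2) := by
      have hKe : K * (a₀ / 2) = (1 + LR * c) * (a₀ / 2) + (LR * c + LR) := by
        rw [hK]; field_simp
      nlinarith [mul_nonneg hLR0 hc0.le]
    have hK1 : 1 + LR * c ≤ K := by
      rw [hK]
      nlinarith [mul_nonneg (add_nonneg (mul_nonneg hLR0 hc0.le) hLR0)
        (by positivity : (0:ℝ) ≤ 2 / a₀)]
    rw [hE'eq, hwx]
    have hExeq : E x = ε^2 * ‖φ' x‖^2 + b x * ‖φ x‖^2 := by rw [hE]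
    rw [hExeq]
    have h4 : (1 + LR * c) * (ε^2 * ‖φ' x‖^2) ≤ K * (ε^2 * ‖φ' x‖^2) :=
      mul_le_mul_of_nonneg_right hK1 (by positivity)
    have h5 : (LR * c + LR) * ‖φ x‖^2 ≤ K * (a₀ / 2) * ‖φ x‖^2 :=
      mul_le_mul_of_nonneg_right hKb (sq_nonneg _)
    have h6 : K * (a₀ / 2) * ‖φ x‖^2 ≤ K * b x * ‖φ x‖^2 :=
      mul_le_mul_of_nonneg_right (mul_le_mul_of_nonneg_left hbl hK0) (sq_nonneg _)
    ring_nf at key1 key2 key3 h4 h5 h6 ⊢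
    linarith [key1, key2, key3, h4, h5, h6]
  have hξmem : ξ ∈ Icc ξ η := left_mem_Icc.2 hξη.le
  have hEξ0 : 0 ≤ E ξ := by
    have := hblb ξ hξmem
    have h0 : E ξ = ε^2 * ‖φ' ξ‖^2 + b ξ * ‖φ ξ‖^2 := by rw [hE]
    rw [h0]
    have h1 : (0:ℝ) ≤ ε^2 * ‖φ' ξ‖^2 := by positivity
    nlinarith [sq_nonneg ‖φ ξ‖]
  have hgr := gronwall_aux ξ η K hK0 E E' h hEd hhc hh0 hEξ0 hle
  intro x hx
  have hEx := hgr x hx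
  obtain ⟨F, hF⟩ : ∃ w : ℝ, w = ∫ s in ξ..η, ‖f s‖^2 := ⟨_, rfl⟩
  have hF0 : 0 ≤ F := by
    rw [hF]
    exact intervalIntegral.integral_nonneg hξη.le fun s _ => by positivity
  have hInt : (∫ s in ξ..η, h s) = (ε^2)⁻¹ * F := by
    simp only [hh]
    rw [intervalIntegral.integral_const_mul, hF]
    congr 1
    apply intervalIntegral.integral_congr
    intro s hs
    rw [uIcc_of_le hξη.le] at hs
    simp only [hfEeq s hs]
  have hnφb : ε^2 * ‖φ' ξ‖^2 = ‖φb‖^2 := by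
    rw [← hφb, norm_mul, Complex.norm_real, Real.norm_eq_abs, abs_of_pos hε, mul_pow]
  have hEξle : E ξ ≤ ‖φb‖^2 + A * ‖φa‖^2 := by
    have h1 : E ξ = ε^2 * ‖φ' ξ‖^2 + b ξ * ‖φ ξ‖^2 := by rw [hE]
    rw [h1, hnφb, hφa]
    nlinarith [sq_nonneg ‖φa‖, hbξ]
  obtain ⟨S, hS⟩ : ∃ w : ℝ, w = ‖φb‖^2 + A * ‖φa‖^2 + (ε^2)⁻¹ * F := ⟨_, rfl⟩
  have hS0 : 0 ≤ S := by rw [hS]; positivity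
  have hφxsq : ‖φ x‖^2 ≤ (2 * M / a₀) * S := by
    have h1 : a₀ / 2 * ‖φ x‖^2 ≤ E x := by
      have hExe : E x = ε^2 * ‖φ' x‖^2 + b x * ‖φ x‖^2 := by rw [hE]
      rw [hExe]
      have := hblb x hx
      have h2 : (0:ℝ) ≤ ε^2 * ‖φ' x‖^2 := by positivity
      nlinarith [sq_nonneg ‖φ x‖]
    have h2 : E x ≤ M * S := by
      rw [hInt, ← hM] at hEx
      have : E ξ + (ε^2)⁻¹ * F ≤ S := by rw [hS]; linarith [hEξle]
      calc E x ≤ M * (E ξ + (ε^2)⁻¹ * F) := hEx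
        _ ≤ M * S := mul_le_mul_of_nonneg_left this hM0.le
    have h3 : (2 * M / a₀) * S = (2 * (M * S)) / a₀ := by ring
    rw [h3, le_div_iff₀ ha₀]
    linarith [h1, h2]
  have hφx : ‖φ x‖ ≤ Real.sqrt (2 * M / a₀) * Real.sqrt S := by
    have h1 := Real.sqrt_le_sqrt hφxsq
    rw [Real.sqrt_sq (norm_nonneg _)] at h1
    rwa [Real.sqrt_mul (by positivity : (0:ℝ) ≤ 2 * M / a₀)] at h1
  have hsqS : Real.sqrt S ≤ ‖φb‖ + Real.sqrt A * ‖φa‖ + ε⁻¹ * Real.sqrt F := by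
    have h1 : Real.sqrt S ≤ Real.sqrt (‖φb‖^2) + Real.sqrt (A * ‖φa‖^2 + (ε^2)⁻¹ * F) := by
      rw [hS, add_assoc]
      exact sqrt_add_le' (sq_nonneg _) (by positivity)
    have h2 : Real.sqrt (A * ‖φa‖^2 + (ε^2)⁻¹ * F)
        ≤ Real.sqrt (A * ‖φa‖^2) + Real.sqrt ((ε^2)⁻¹ * F) :=
      sqrt_add_le' (by positivity) (by positivity)
    have h3 : Real.sqrt (‖φb‖^2) = ‖φb‖ := Real.sqrt_sq (norm_nonneg _)
    have h4 : Real.sqrt (A * ‖φa‖^2) = Real.sqrt A * ‖φa‖ := by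
      rw [Real.sqrt_mul hA0.le, Real.sqrt_sq (norm_nonneg _)]
    have h5 : Real.sqrt ((ε^2)⁻¹ * F) = ε⁻¹ * Real.sqrt F := by
      rw [Real.sqrt_mul (by positivity), Real.sqrt_inv, Real.sqrt_sq hε.le]
    linarith [h1, h2, h3.le, h4.le, h5.le]
  obtain ⟨R, hR⟩ : ∃ w : ℝ, w = Real.sqrt (2 * M / a₀) := ⟨_, rfl⟩
  have hR0 : 0 ≤ R := by rw [hR]; exact Real.sqrt_nonneg _
  have hfin : ‖φ x‖ ≤ R * (‖φb‖ + Real.sqrt A * ‖φa‖ + ε⁻¹ * Real.sqrt F) := by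
    calc ‖φ x‖ ≤ R * Real.sqrt S := by rw [hR]; exact hφx
      _ ≤ R * (‖φb‖ + Real.sqrt A * ‖φa‖ + ε⁻¹ * Real.sqrt F) :=
          mul_le_mul_of_nonneg_left hsqS hR0
  have hsA := Real.sqrt_nonneg A
  have hsF := Real.sqrt_nonneg F
  have hεinv : 0 ≤ ε⁻¹ := by positivity
  rw [div_eq_mul_inv, ← hF, ← hR]
  nlinarith [hfin, mul_nonneg (mul_nonneg (mul_nonneg hR0 hsA) hεinv) hsF,
    mul_nonneg hR0 (norm_nonneg φb), mul_nonneg (mul_nonneg hR0 hsA) (norm_nonneg φa),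
    mul_nonneg hR0 (mul_nonneg hsA (norm_nonneg φa)), mul_nonneg hR0 (norm_nonneg φa)]
end

section
/- Under the same hypotheses as the a priori estimate for the Schrödinger IVP ε²φ'' + aφ = f with φ(ξ)=φ̂₀, εφ'(ξ)=φ̂₁, there exists C > 0 independent of ε such that ‖εφ'‖_{L^∞(I)} ≤ (C/ε)‖f‖_{L²(I)} + C(|φ̂₁| + |φ̂₀|). -/
open Set intervalIntegral Filter Topology

private lemma cx_norm_sq (z : ℂ) : ‖z‖^2 = z.re^2 + z.im^2 := by
  rw [Complex.sq_norm, Complex.normSq_apply]; ring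

private lemma sqrt_add_le'_s1 {A B : ℝ} (hA : 0 ≤ A) (hB : 0 ≤ B) :
    Real.sqrt (A + B) ≤ Real.sqrt A + Real.sqrt B := by
  have h1 : A + B ≤ (Real.sqrt A + Real.sqrt B)^2 := by
    nlinarith [Real.sq_sqrt hA, Real.sq_sqrt hB, Real.sqrt_nonneg A, Real.sqrt_nonneg B]
  calc Real.sqrt (A + B) ≤ Real.sqrt ((Real.sqrt A + Real.sqrt B)^2) := Real.sqrt_le_sqrt h1
    _ = Real.sqrt A + Real.sqrt B :=
      Real.sqrt_sq (add_nonneg (Real.sqrt_nonneg A) (Real.sqrt_nonneg B))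

private lemma hasDerivAt_cre {g : ℝ → ℂ} {g' : ℂ} {x : ℝ} (h : HasDerivAt g g' x) :
    HasDerivAt (fun y => (g y).re) (g'.re) x :=
  Complex.reCLM.hasFDerivAt.comp_hasDerivAt x h

private lemma hasDerivAt_cim {g : ℝ → ℂ} {g' : ℂ} {x : ℝ} (h : HasDerivAt g g' x) :
    HasDerivAt (fun y => (g y).im) (g'.im) x :=
  Complex.imCLM.hasFDerivAt.comp_hasDerivAt x h

set_option maxHeartbeats 1000000 in
/-- A priori L^∞ estimate for the solution of the inhomogeneous Schrödinger IVP
    ε²φ'' + aφ = f, φ(ξ) = φa, εφ'(ξ) = φb, with a Lipschitz and bounded below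
    by a₀ > 0. The constant C is independent of ε, f, φa, φb. -/
theorem apriori_estimate_sup_eps_dphi
    (ξ η : ℝ) (hξη : ξ < η) (a : ℝ → ℝ) (a₀ L : ℝ) (ha₀ : 0 < a₀)
    (ha : ∀ x ∈ Icc ξ η, a₀ ≤ a x)
    (haLip : LipschitzOnWith (Real.toNNReal L) a (Icc ξ η)) :
    ∃ C > 0, ∀ (ε : ℝ), 0 < ε → ε ≤ 1 →
      ∀ (f φ φ' φ'' : ℝ → ℂ) (φa φb : ℂ),
        ContinuousOn f (Icc ξ η) →
        (∀ x ∈ Icc ξ η, HasDerivAt φ (φ' x) x) →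
        (∀ x ∈ Icc ξ η, HasDerivAt φ' (φ'' x) x) →
        (∀ x ∈ Icc ξ η, (ε : ℂ)^2 * φ'' x + (a x : ℂ) * φ x = f x) →
        φ ξ = φa → (ε : ℂ) * φ' ξ = φb →
        ∀ x ∈ Icc ξ η,
          ‖(ε : ℂ) * φ' x‖ ≤ (C / ε) * Real.sqrt (∫ s in ξ..η, ‖f s‖^2)
                    + C * (‖φb‖ + ‖φa‖) := by
  have hξη' : ξ ≤ η := hξη.le
  set L' : ℝ := (Real.toNNReal L : ℝ) with hL'def
  have hL'0 : 0 ≤ L' := NNReal.coe_nonneg _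
  set c : ℝ := 1 + L' / a₀ with hcdef
  have hc1 : (1:ℝ) ≤ c := le_add_of_nonneg_right (div_nonneg hL'0 ha₀.le)
  have hc0 : (0:ℝ) < c := lt_of_lt_of_le one_pos hc1
  have hcL : L' ≤ c * a₀ := by
    rw [hcdef, add_mul, one_mul, div_mul_cancel₀ _ ha₀.ne']
    linarith
  set Exp : ℝ := Real.exp (c * (η - ξ)) with hExpdef
  have hExp1 : (1:ℝ) ≤ Exp := Real.one_le_exp (by nlinarith)
  have hsE1 : (1:ℝ) ≤ Real.sqrt (Exp + 1) := by
    have h := Real.sqrt_le_sqrt (show (1:ℝ) ≤ Exp + 1 by linarith)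
    rwa [Real.sqrt_one] at h
  have haξ0 : (0:ℝ) ≤ a ξ := le_trans ha₀.le (ha ξ ⟨le_rfl, hξη'⟩)
  set C : ℝ := Real.sqrt (Exp + 1) * (1 + Real.sqrt (a ξ)) with hCdef
  have hC0 : 0 < C := by
    have := Real.sqrt_nonneg (a ξ)
    nlinarith
  clear_value L' c Exp C
  refine ⟨C, hC0, ?_⟩
  intro ε hε hε1 f φ φ' φ'' φa φb hf hφ hφ'' heq hφa hφb
  have hε2 : (0:ℝ) < ε^2 := by positivity
  -- continuity of data
  have hfc2 : ContinuousOn (fun s => ‖f s‖^2) (Icc ξ η) := hf.norm.pow 2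
  have hIf : IntervalIntegrable (fun s => ‖f s‖^2) MeasureTheory.volume ξ η := by
    apply ContinuousOn.intervalIntegrable
    rwa [uIcc_of_le hξη']
  have hIsub : ∀ {s t : ℝ}, s ∈ Icc ξ η → t ∈ Icc ξ η →
      IntervalIntegrable (fun s => ‖f s‖^2) MeasureTheory.volume s t := by
    intro s t hs ht
    apply hIf.mono_set
    rw [uIcc_of_le hξη']
    exact uIcc_subset_Icc hs ht
  set F : ℝ := ∫ s in ξ..η, ‖f s‖^2 with hFdef
  have hF0 : 0 ≤ F := by
    rw [hFdef]
    exact intervalIntegral.integral_nonneg hξη' (fun s _ => sq_nonneg _)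
  set u : ℝ → ℝ := fun y => ε^2 * ((φ' y).re^2 + (φ' y).im^2) with hudef
  set v : ℝ → ℝ := fun y => (φ y).re^2 + (φ y).im^2 with hvdef
  set P : ℝ → ℝ := fun y => ∫ s in ξ..y, ‖f s‖^2 with hPdef
  set G : ℝ → ℝ := fun y => u y + a y * v y - (1/ε^2) * P y with hGdef
  set D : ℝ → ℝ := fun y =>
    2*((f y).re*(φ' y).re + (f y).im*(φ' y).im) + L' * v y - (1/ε^2) * ‖f y‖^2 with hDdef
  have hu0 : ∀ y, 0 ≤ u y := fun y => by
    simp only [hudef]; positivity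
  have hv0 : ∀ y, 0 ≤ v y := fun y => by
    simp only [hvdef]; positivity
  clear_value F u v P G D
  -- componentwise ODE
  have heqre : ∀ y ∈ Icc ξ η, ε^2 * (φ'' y).re = (f y).re - a y * (φ y).re := by
    intro y hy
    have h := congrArg Complex.re (heq y hy)
    simp only [Complex.add_re, Complex.mul_re, Complex.ofReal_re, Complex.ofReal_im, pow_two,
      mul_zero, zero_mul, sub_zero, add_zero, zero_add, Complex.mul_im] at h
    rw [pow_two]
    linarith
  have heqim : ∀ y ∈ Icc ξ η, ε^2 * (φ'' y).im = (f y).im - a y * (φ y).im := by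
    intro y hy
    have h := congrArg Complex.im (heq y hy)
    simp only [Complex.add_im, Complex.mul_re, Complex.mul_im, Complex.ofReal_re,
      Complex.ofReal_im, pow_two, mul_zero, zero_mul, sub_zero, add_zero, zero_add] at h
    rw [pow_two]
    linarith
  -- derivatives of the energies
  have hdv : ∀ y ∈ Icc ξ η,
      HasDerivAt v (2*((φ y).re*(φ' y).re + (φ y).im*(φ' y).im)) y := by
    intro y hy
    rw [hvdef]
    have h1 := hasDerivAt_cre (hφ y hy)
    have h2 := hasDerivAt_cim (hφ y hy)
    refine ((h1.fun_pow 2).add (h2.fun_pow 2)).congr_deriv ?_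
    push_cast
    ring
  have hdu : ∀ y ∈ Icc ξ η,
      HasDerivAt u (2*((f y).re*(φ' y).re + (f y).im*(φ' y).im)
        - a y * (2*((φ y).re*(φ' y).re + (φ y).im*(φ' y).im))) y := by
    intro y hy
    rw [hudef]
    have h1 := hasDerivAt_cre (hφ'' y hy)
    have h2 := hasDerivAt_cim (hφ'' y hy)
    refine (((h1.fun_pow 2).add (h2.fun_pow 2)).const_mul (ε^2)).congr_deriv ?_
    have e1 := heqre y hy
    have e2 := heqim y hy
    linear_combination (norm := (push_cast; ring1)) (2*(φ' y).re) * e1 + (2*(φ' y).im) * e2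
  -- continuity of the energy
  have hac : ContinuousOn a (Icc ξ η) := haLip.continuousOn
  have huc : ContinuousOn u (Icc ξ η) :=
    fun y hy => (hdu y hy).continuousAt.continuousWithinAt
  have hvc : ContinuousOn v (Icc ξ η) :=
    fun y hy => (hdv y hy).continuousAt.continuousWithinAt
  have hPc : ContinuousOn P (Icc ξ η) := by
    have h := intervalIntegral.continuousOn_primitive_interval
      (μ := MeasureTheory.volume) (f := fun s => ‖f s‖^2) (a := ξ) (b := η)
      (by rw [uIcc_of_le hξη']; exact hfc2.integrableOn_Icc)
    rw [uIcc_of_le hξη'] at h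
    rw [hPdef]
    exact h
  have hGc : ContinuousOn G (Icc ξ η) := by
    rw [hGdef]
    exact (huc.add (hac.mul hvc)).sub (continuousOn_const.mul hPc)
  have hPle : ∀ y ∈ Icc ξ η, P y ≤ F := by
    intro y hy
    simp only [hPdef, hFdef]
    exact intervalIntegral.integral_mono_interval le_rfl hy.1 hy.2
      (Filter.Eventually.of_forall (fun s => sq_nonneg _)) hIf
  -- Gronwall
  have key : ∀ y ∈ Icc ξ η, G y ≤ gronwallBound (G ξ) c (c * ((1/ε^2) * F)) (y - ξ) := by
    apply le_gronwallBound_of_liminf_deriv_right_le (f' := D) hGc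
    · -- liminf condition
      intro y hy r hr
      have hyI : y ∈ Icc ξ η := ⟨hy.1, hy.2.le⟩
      set θ : ℝ := (r - D y)/3 with hθdef
      clear_value θ
      have hθ0 : 0 < θ := by rw [hθdef]; exact div_pos (sub_pos.2 hr) (by norm_num)
      -- continuity of ‖f‖² near y
      have hfy : ∀ᶠ s in 𝓝[Icc ξ η] y, ‖f y‖^2 - ε^2*θ < ‖f s‖^2 := by
        have hcw : ContinuousWithinAt (fun s => ‖f s‖^2) (Icc ξ η) y := hfc2 y hyI
        exact hcw.eventually (eventually_gt_nhds
          (show ‖f y‖^2 - ε^2*θ < ‖f y‖^2 by linarith [mul_pos hε2 hθ0]))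
      obtain ⟨δ₀, hδ₀, hball⟩ := Metric.mem_nhdsWithin_iff.1 hfy
      have hev1 : ∀ᶠ z in 𝓝[>] y, z ∈ Ioc y η := Ioc_mem_nhdsGT_of_mem ⟨le_rfl, hy.2⟩
      have hev2 : ∀ᶠ z in 𝓝[>] y, z ∈ Ioo y (y + δ₀) :=
        Ioo_mem_nhdsGT_of_mem ⟨le_rfl, by linarith⟩
      have hleIcc : 𝓝[>] y ≤ 𝓝[Icc ξ η] y :=
        nhdsWithin_le_of_mem (mem_of_superset hev1 (fun z hz => ⟨hy.1.trans hz.1.le, hz.2⟩))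
      have hlene : 𝓝[>] y ≤ 𝓝[≠] y :=
        nhdsWithin_mono y (fun z (hz : y < z) => by simp [hz.ne'])
      have hslu : Tendsto (slope u y) (𝓝[>] y)
          (𝓝 (2*((f y).re*(φ' y).re + (f y).im*(φ' y).im)
            - a y * (2*((φ y).re*(φ' y).re + (φ y).im*(φ' y).im)))) :=
        (hasDerivAt_iff_tendsto_slope.1 (hdu y hyI)).mono_left hlene
      have hslv : Tendsto (slope v y) (𝓝[>] y)
          (𝓝 (2*((φ y).re*(φ' y).re + (φ y).im*(φ' y).im))) :=
        (hasDerivAt_iff_tendsto_slope.1 (hdv y hyI)).mono_left hlene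
      have hta : Tendsto a (𝓝[>] y) (𝓝 (a y)) := (hac y hyI).mono_left hleIcc
      have hsum := hslu.add (hta.mul hslv)
      have hev3 : ∀ᶠ z in 𝓝[>] y, slope u y z + a z * slope v y z
          < 2*((f y).re*(φ' y).re + (f y).im*(φ' y).im) + θ := by
        apply hsum.eventually (eventually_lt_nhds ?_)
        linarith
      apply ((hev1.and (hev2.and hev3)).mono ?_).frequently
      rintro z ⟨hz1, hz2, hz3⟩
      have hw : 0 < z - y := sub_pos.2 hz1.1
      have hzI : z ∈ Icc ξ η := ⟨hy.1.trans hz1.1.le, hz1.2⟩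
      -- integral lower bound
      have hJ : (z - y) * (‖f y‖^2 - ε^2*θ) ≤ ∫ s in y..z, ‖f s‖^2 := by
        have hmono := intervalIntegral.integral_mono_on (μ := MeasureTheory.volume) hz1.1.le
          (_root_.intervalIntegrable_const (c := ‖f y‖^2 - ε^2*θ)) (hIsub hyI hzI)
          (fun s hs => le_of_lt (hball ⟨by
              rw [Metric.mem_ball, Real.dist_eq, abs_of_nonneg (by linarith [hs.1])]
              have := hs.2
              have := hz2.2
              linarith,
            ⟨hyI.1.trans hs.1, hs.2.trans hzI.2⟩⟩))
        rw [intervalIntegral.integral_const, smul_eq_mul] at hmono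
        exact hmono
      have hsplit : P z - P y = ∫ s in y..z, ‖f s‖^2 := by
        have h := intervalIntegral.integral_add_adjacent_intervals
          (hIsub ⟨le_rfl, hξη'⟩ hyI) (hIsub hyI hzI)
        simp only [hPdef]
        linarith [h]
      have hLip : a z - a y ≤ L' * (z - y) := by
        have h := haLip.dist_le_mul z hzI y hyI
        rw [Real.dist_eq, Real.dist_eq, abs_of_pos hw] at h
        calc a z - a y ≤ |a z - a y| := le_abs_self _
          _ ≤ L' * (z - y) := by rw [hL'def]; exact h
      have hGzy : G z - G y = (u z - u y) + a z * (v z - v y) + (a z - a y) * v y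
          - (1/ε^2) * (∫ s in y..z, ‖f s‖^2) := by
        simp only [hGdef]
        rw [← hsplit]
        ring
      have hinv : (0:ℝ) ≤ (z - y)⁻¹ := (inv_nonneg).2 hw.le
      have hslu_eq : slope u y z = (z - y)⁻¹ * (u z - u y) := by
        rw [slope_def_field, div_eq_inv_mul]
      have hslv_eq : slope v y z = (z - y)⁻¹ * (v z - v y) := by
        rw [slope_def_field, div_eq_inv_mul]
      have b1 : (z - y)⁻¹ * ((a z - a y) * v y) ≤ L' * v y := by
        have h1 : (a z - a y) * v y ≤ L' * (z - y) * v y :=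
          mul_le_mul_of_nonneg_right hLip (hv0 y)
        calc (z - y)⁻¹ * ((a z - a y) * v y) ≤ (z - y)⁻¹ * (L' * (z - y) * v y) :=
              mul_le_mul_of_nonneg_left h1 hinv
          _ = L' * v y := by field_simp
      have b2 : ‖f y‖^2 - ε^2*θ ≤ (z - y)⁻¹ * ∫ s in y..z, ‖f s‖^2 := by
        have h := mul_le_mul_of_nonneg_left hJ hinv
        rwa [← mul_assoc, inv_mul_cancel₀ hw.ne', one_mul] at h
      have b2' : (1/ε^2) * (‖f y‖^2 - ε^2*θ) ≤
          (1/ε^2) * ((z - y)⁻¹ * ∫ s in y..z, ‖f s‖^2) :=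
        mul_le_mul_of_nonneg_left b2 (by positivity)
      have hεne : ε ≠ 0 := hε.ne'
      have b3 : (1/ε^2) * (‖f y‖^2 - ε^2*θ) = (1/ε^2)*‖f y‖^2 - θ := by
        field_simp
      have hDy : D y = 2*((f y).re*(φ' y).re + (f y).im*(φ' y).im) + L' * v y
          - (1/ε^2) * ‖f y‖^2 := by rw [hDdef]
      have hcalc : (z - y)⁻¹ * (G z - G y)
          = slope u y z + a z * slope v y z + (z - y)⁻¹ * ((a z - a y) * v y)
            - (1/ε^2) * ((z - y)⁻¹ * ∫ s in y..z, ‖f s‖^2) := by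
        rw [hGzy, hslu_eq, hslv_eq]
        ring
      rw [hcalc]
      have hθ3 : r = D y + 3*θ := by rw [hθdef]; ring
      linarith [hz3, b1, b2', b3, hDy, hθ3, hθ0]
    · exact le_rfl
    · -- bound : D y ≤ c * G y + c * ((1/ε²)·F)
      intro y hy
      have hyI : y ∈ Icc ξ η := ⟨hy.1, hy.2.le⟩
      have hP0 : 0 ≤ P y := by
        simp only [hPdef]
        exact intervalIntegral.integral_nonneg hy.1 (fun s _ => sq_nonneg _)
      have key2 : ∀ A B : ℝ, 2*(A*B) ≤ (1/ε^2)*A^2 + ε^2*B^2 := by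
        intro A B
        have h := sq_nonneg (A/ε - ε*B)
        have hid : (A/ε - ε*B)^2 = (1/ε^2)*A^2 + ε^2*B^2 - 2*(A*B) := by
          field_simp
          ring
        rw [hid] at h
        linarith
      have hS : 2*((f y).re*(φ' y).re + (f y).im*(φ' y).im)
          ≤ (1/ε^2)*((f y).re^2 + (f y).im^2) + u y := by
        simp only [hudef]
        nlinarith [key2 (f y).re (φ' y).re, key2 (f y).im (φ' y).im]
      have hav : u y + L' * v y ≤ c * (u y + a y * v y) := by
        have h1 : L' * v y ≤ (c*a₀) * v y := mul_le_mul_of_nonneg_right hcL (hv0 y)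
        have h2 : a₀ ≤ a y := ha y hyI
        have h3 : (c*a₀) * v y ≤ (c*a y) * v y :=
          mul_le_mul_of_nonneg_right (mul_le_mul_of_nonneg_left h2 hc0.le) (hv0 y)
        have h4 : u y ≤ c * u y := le_mul_of_one_le_left (hu0 y) hc1
        linarith [h1, h3, h4]
      have hD1 : D y ≤ c * (u y + a y * v y) := by
        simp only [hDdef]
        rw [cx_norm_sq (f y)]
        linarith [hS, hav]
      have hGrel : u y + a y * v y = G y + (1/ε^2) * P y := by
        simp only [hGdef]; ring
      have hPF : (1/ε^2) * P y ≤ (1/ε^2) * F :=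
        mul_le_mul_of_nonneg_left (hPle y hyI) (by positivity)
      calc D y ≤ c * (G y + (1/ε^2) * P y) := by rw [← hGrel]; exact hD1
        _ ≤ c * G y + c * ((1/ε^2) * F) := by nlinarith [hPF, hc0, mul_le_mul_of_nonneg_left hPF hc0.le]
  -- extract the final estimate
  intro x hx
  have hPξ : P ξ = 0 := by simp only [hPdef]; exact intervalIntegral.integral_same
  have hGξ0 : 0 ≤ G ξ := by
    simp only [hGdef]
    rw [hPξ, mul_zero]
    have h1 := ha ξ ⟨le_rfl, hξη'⟩
    have h2 := mul_nonneg (le_trans ha₀.le h1) (hv0 ξ)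
    linarith [hu0 ξ]
  have hGB : gronwallBound (G ξ) c (c*((1/ε^2)*F)) (x - ξ) ≤ Exp * (G ξ + (1/ε^2)*F) := by
    rw [gronwallBound_of_K_ne_0 hc0.ne']
    have hdiv : c*((1/ε^2)*F)/c = (1/ε^2)*F := mul_div_cancel_left₀ _ hc0.ne'
    rw [hdiv]
    have he : Real.exp (c*(x-ξ)) ≤ Exp := by
      rw [hExpdef]
      exact Real.exp_le_exp.2 (mul_le_mul_of_nonneg_left (by linarith [hx.2]) hc0.le)
    have he0 : (0:ℝ) < Real.exp (c*(x-ξ)) := Real.exp_pos _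
    have hf2 : (0:ℝ) ≤ (1/ε^2)*F := by positivity
    nlinarith [mul_le_mul_of_nonneg_left he hGξ0, mul_le_mul_of_nonneg_left he hf2]
  have hux : u x ≤ (Exp + 1) * (G ξ + (1/ε^2)*F) := by
    have h1 : u x = G x + (1/ε^2)*P x - a x * v x := by simp only [hGdef]; ring
    have hav0 : 0 ≤ a x * v x := mul_nonneg (le_trans ha₀.le (ha x hx)) (hv0 x)
    have hPF : (1/ε^2)*P x ≤ (1/ε^2)*F :=
      mul_le_mul_of_nonneg_left (hPle x hx) (by positivity)
    have hG := (key x hx).trans hGB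
    have hf2 : (0:ℝ) ≤ (1/ε^2)*F := by positivity
    nlinarith [hG, h1, hPF, hav0, hGξ0, hf2]
  have hGξval : G ξ = ‖φb‖^2 + a ξ * ‖φa‖^2 := by
    have h1 : u ξ = ‖φb‖^2 := by
      rw [← hφb, cx_norm_sq]
      simp only [hudef, Complex.mul_re, Complex.mul_im, Complex.ofReal_re, Complex.ofReal_im]
      ring
    have h2 : v ξ = ‖φa‖^2 := by
      rw [hvdef, ← hφa, cx_norm_sq]
    simp only [hGdef]
    rw [hPξ, h1, h2]
    ring
  have hnorm : ‖(ε:ℂ) * φ' x‖ = Real.sqrt (u x) := by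
    have h : u x = ‖(ε:ℂ) * φ' x‖^2 := by
      rw [cx_norm_sq]
      simp only [hudef, Complex.mul_re, Complex.mul_im, Complex.ofReal_re, Complex.ofReal_im]
      ring
    rw [h, Real.sqrt_sq (norm_nonneg _)]
  rw [hnorm]
  have hstep1 : Real.sqrt (u x)
      ≤ Real.sqrt ((Exp+1) * (‖φb‖^2 + a ξ*‖φa‖^2 + (1/ε^2)*F)) := by
    apply Real.sqrt_le_sqrt
    rw [show ‖φb‖^2 + a ξ*‖φa‖^2 + (1/ε^2)*F = (G ξ + (1/ε^2)*F) by rw [hGξval]]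
    exact hux
  have hsplit : Real.sqrt ((Exp+1) * (‖φb‖^2 + a ξ*‖φa‖^2 + (1/ε^2)*F))
      = Real.sqrt (Exp+1) * Real.sqrt (‖φb‖^2 + a ξ*‖φa‖^2 + (1/ε^2)*F) :=
    Real.sqrt_mul (by linarith) _
  have hA1 : (0:ℝ) ≤ ‖φb‖^2 := sq_nonneg _
  have hA2 : (0:ℝ) ≤ a ξ*‖φa‖^2 := mul_nonneg haξ0 (sq_nonneg _)
  have hA3 : (0:ℝ) ≤ (1/ε^2)*F := by positivity
  have hsqrt3 : Real.sqrt (‖φb‖^2 + a ξ*‖φa‖^2 + (1/ε^2)*F)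
      ≤ ‖φb‖ + Real.sqrt (a ξ)*‖φa‖ + (1/ε)*Real.sqrt F := by
    have h1 := sqrt_add_le'_s1 (add_nonneg hA1 hA2) hA3
    have h2 := sqrt_add_le'_s1 hA1 hA2
    have e1 : Real.sqrt (‖φb‖^2) = ‖φb‖ := Real.sqrt_sq (norm_nonneg _)
    have e2 : Real.sqrt (a ξ*‖φa‖^2) = Real.sqrt (a ξ)*‖φa‖ := by
      rw [Real.sqrt_mul haξ0, Real.sqrt_sq (norm_nonneg _)]
    have e3 : Real.sqrt ((1/ε^2)*F) = (1/ε)*Real.sqrt F := by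
      rw [show (1/ε^2 : ℝ) = (1/ε)^2 by ring, Real.sqrt_mul (sq_nonneg _),
        Real.sqrt_sq (by positivity)]
    linarith [h1, h2, e1.le, e2.le, e3.le, e1.ge, e2.ge, e3.ge]
  have hfinal : Real.sqrt (Exp+1) * (‖φb‖ + Real.sqrt (a ξ)*‖φa‖ + (1/ε)*Real.sqrt F)
      ≤ (C/ε) * Real.sqrt F + C * (‖φb‖ + ‖φa‖) := by
    have hsE0 : (0:ℝ) ≤ Real.sqrt (Exp+1) := Real.sqrt_nonneg _
    have hsa0 : (0:ℝ) ≤ Real.sqrt (a ξ) := Real.sqrt_nonneg _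
    have hsF0 : (0:ℝ) ≤ Real.sqrt F := Real.sqrt_nonneg _
    have hb0 : (0:ℝ) ≤ ‖φb‖ := norm_nonneg _
    have ha0' : (0:ℝ) ≤ ‖φa‖ := norm_nonneg _
    have hinvε : (0:ℝ) < 1/ε := by positivity
    have hle : Real.sqrt (Exp+1) ≤ C := by
      rw [hCdef]
      exact le_mul_of_one_le_right hsE0 (by linarith [hsa0])
    have t1 : Real.sqrt (Exp+1) * ((1/ε)*Real.sqrt F) ≤ (C/ε) * Real.sqrt F := by
      calc Real.sqrt (Exp+1) * ((1/ε)*Real.sqrt F)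
          = (Real.sqrt (Exp+1)*Real.sqrt F) * (1/ε) := by ring
        _ ≤ (C*Real.sqrt F) * (1/ε) :=
            mul_le_mul_of_nonneg_right (mul_le_mul_of_nonneg_right hle hsF0) hinvε.le
        _ = (C/ε) * Real.sqrt F := by ring
    have t2 : Real.sqrt (Exp+1) * (‖φb‖ + Real.sqrt (a ξ)*‖φa‖) ≤ C * (‖φb‖ + ‖φa‖) := by
      rw [hCdef]
      nlinarith [mul_nonneg hsE0 (mul_nonneg hsa0 hb0), mul_nonneg hsE0 ha0']
    nlinarith [t1, t2]
  calc Real.sqrt (u x) ≤ Real.sqrt (Exp+1) * Real.sqrt (‖φb‖^2 + a ξ*‖φa‖^2 + (1/ε^2)*F) := by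
        rw [← hsplit]; exact hstep1
    _ ≤ Real.sqrt (Exp+1) * (‖φb‖ + Real.sqrt (a ξ)*‖φa‖ + (1/ε)*Real.sqrt F) :=
        mul_le_mul_of_nonneg_left hsqrt3 (Real.sqrt_nonneg _)
    _ ≤ (C/ε) * Real.sqrt F + C * (‖φb‖ + ‖φa‖) := hfinal
end

section
/- For every n ≥ 2 and every integer j with 1 ≤ j ≤ n-1, it holds that j^j (n-j)^{n-j} ≤ (n-1)^{n-1}, and consequently Σ_{j=1}^{n-1} j^j (n-j)^{n-j} ≤ (n-1)^n. -/
lemma aux_pow (x d m : ℕ) : x ^ m * (x + m * d) ≤ (x + d) ^ (m + 1) := by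
  induction m with
  | zero => simp
  | succ m ih =>
    calc x ^ (m + 1) * (x + (m + 1) * d)
        ≤ (x + d) * (x ^ m * (x + m * d)) := by
          ring_nf
          nlinarith [Nat.zero_le (x ^ m * m * d ^ 2)]
      _ ≤ (x + d) * (x + d) ^ (m + 1) := Nat.mul_le_mul_left _ ih
      _ = (x + d) ^ (m + 1 + 1) := by ring

lemma aux_mul (a b : ℕ) (ha : 1 ≤ a) (hab : a ≤ b) :
    a * b ^ (a + b - 1) ≤ (a + b - 1) ^ (a + b - 1) := by
  rcases Nat.lt_or_ge a 2 with h2 | h2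
  · interval_cases a
    simp
  · obtain ⟨c, rfl⟩ : ∃ c, a = c + 2 := ⟨a - 2, by omega⟩
    have key := aux_pow b (c + 1) (c + b)
    have h1 : c + 2 + b - 1 = c + b + 1 := by omega
    have h2' : b + (c + 1) = c + b + 1 := by omega
    rw [h2'] at key
    rw [h1]
    calc (c + 2) * b ^ (c + b + 1)
        = b ^ (c + b) * ((c + 2) * b) := by rw [pow_succ]; ring
      _ ≤ b ^ (c + b) * (b + (c + b) * (c + 1)) := by
          apply Nat.mul_le_mul_left
          nlinarith
      _ ≤ (c + b + 1) ^ (c + b + 1) := key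

lemma aux_key (a b : ℕ) (ha : 1 ≤ a) (hb : 1 ≤ b) :
    a ^ a * b ^ b ≤ (a + b - 1) ^ (a + b - 1) := by
  wlog hab : a ≤ b with H
  · calc a ^ a * b ^ b = b ^ b * a ^ a := by ring
      _ ≤ (b + a - 1) ^ (b + a - 1) := H b a hb ha (by omega)
      _ = (a + b - 1) ^ (a + b - 1) := by rw [Nat.add_comm b a]
  · have h1 : a ^ a ≤ a * b ^ (a - 1) := by
      nth_rewrite 2 [show a = (a - 1) + 1 by omega]
      rw [pow_succ']
      exact Nat.mul_le_mul_left a (Nat.pow_le_pow_left hab _)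
    calc a ^ a * b ^ b ≤ a * b ^ (a - 1) * b ^ b := Nat.mul_le_mul_right _ h1
      _ = a * b ^ (a - 1 + b) := by rw [mul_assoc, ← pow_add]
      _ = a * b ^ (a + b - 1) := by rw [show a - 1 + b = a + b - 1 by omega]
      _ ≤ (a + b - 1) ^ (a + b - 1) := aux_mul a b ha hab

/-- Combinatorial inequality: for n ≥ 2 and 1 ≤ j ≤ n-1 one has
    jʲ(n-j)^{n-j} ≤ (n-1)^{n-1}, hence the convolution sum
    Σ_{j=1}^{n-1} jʲ(n-j)^{n-j} ≤ (n-1)ⁿ. -/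
theorem pow_convolution_bound (n : ℕ) (hn : 2 ≤ n) :
    (∀ j : ℕ, 1 ≤ j → j ≤ n - 1 →
      j ^ j * (n - j) ^ (n - j) ≤ (n - 1) ^ (n - 1)) ∧
    (∑ j ∈ Finset.Ico 1 n, j ^ j * (n - j) ^ (n - j)) ≤ (n - 1) ^ n := by
  have hmain : ∀ j : ℕ, 1 ≤ j → j ≤ n - 1 →
      j ^ j * (n - j) ^ (n - j) ≤ (n - 1) ^ (n - 1) := by
    intro j hj1 hj2
    have h := aux_key j (n - j) hj1 (by omega)
    have heq : j + (n - j) - 1 = n - 1 := by omega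
    rwa [heq] at h
  refine ⟨hmain, ?_⟩
  calc (∑ j ∈ Finset.Ico 1 n, j ^ j * (n - j) ^ (n - j))
      ≤ (Finset.Ico 1 n).card • (n - 1) ^ (n - 1) := by
        apply Finset.sum_le_card_nsmul
        intro j hj
        simp only [Finset.mem_Ico] at hj
        exact hmain j hj.1 (by omega)
    _ = (n - 1) * (n - 1) ^ (n - 1) := by rw [Nat.card_Ico]; simp [smul_eq_mul]
    _ = (n - 1) ^ n := by
        rw [← pow_succ']
        congr 1
        omega
end

section
/- Let Sₙ (n = 0,…,N) be complex-valued C² functions on I satisfying the WKB recurrence: (S₀')² + a = 0 and Sₙ' = -(1/(2S₀'))(Σ_{j=1}^{n-1} S_j' S_{n-j}' + S_{n-1}'') for 1 ≤ n ≤ N+1 (where S_{N+1}' is defined by the same formula). Set φ̃_N = exp(Σ_{n=0}^N ε^{n-1} Sₙ). Then ε²φ̃_N'' + a φ̃_N = φ̃_N · f_{N,ε} with f_{N,ε} = ε^{N+1}(-2S₀'S_{N+1}') + Σ_{n=2}^N Σ_{k=2+N-n}^N ε^{n+k} Sₙ' S_k' (the double sum being empty for N < 2). -/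
open Finset

section WKBAux
open Filter Topology

private lemma wkb_key_aux (f g : ℝ → ℂ) (Z : Set ℝ) (hZ : IsClosed Z) (c : ℝ) (hc : 0 ≤ c)
    (hf : ∀ x, HasDerivAt f (g x) x)
    (hfZ : ∀ x ∈ Z, f x = 0)
    (x₀ x : ℝ) (hx₀ : x₀ ∈ Z) (hxx : x₀ ≤ x)
    (hg : ∀ t, t ∉ Z → t ∈ Set.Icc x₀ x → ‖g t‖ ≤ c) :
    ‖f x‖ ≤ c * (x - x₀) := by
  by_cases hxZ : x ∈ Z
  · rw [hfZ x hxZ]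
    simp only [norm_zero]
    have : 0 ≤ x - x₀ := by linarith
    positivity
  · have hlt : x₀ < x := lt_of_le_of_ne hxx (by rintro rfl; exact hxZ hx₀)
    set s : Set ℝ := Z ∩ Set.Icc x₀ x with hs
    have hsne : s.Nonempty := ⟨x₀, hx₀, le_refl _, le_of_lt hlt⟩
    have hsbdd : BddAbove s := ⟨x, fun t ht => ht.2.2⟩
    have hscl : IsClosed s := hZ.inter isClosed_Icc
    have hy : sSup s ∈ s := hscl.csSup_mem hsne hsbdd
    set y := sSup s with hydef
    have hyZ : y ∈ Z := hy.1
    have hyx : y < x := lt_of_le_of_ne hy.2.2 (by rintro h; rw [h] at hyZ; exact hxZ hyZ)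
    have hnotZ : ∀ t ∈ Set.Ioc y x, t ∉ Z := by
      intro t ht htZ
      exact absurd (le_csSup hsbdd ⟨htZ, le_trans hy.2.1 (le_of_lt ht.1), ht.2⟩) (not_le.2 ht.1)
    have hbound : ∀ y' ∈ Set.Ioc y x, ‖f x - f y'‖ ≤ c * (x - y') := by
      intro y' hy'
      have hgb : ∀ t ∈ Set.Icc y' x, ‖g t‖ ≤ c := by
        intro t ht
        have htI : t ∈ Set.Ioc y x := ⟨lt_of_lt_of_le hy'.1 ht.1, ht.2⟩
        exact hg t (hnotZ t htI) ⟨le_trans hy.2.1 (le_of_lt htI.1), ht.2⟩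
      have := Convex.norm_image_sub_le_of_norm_hasDerivWithin_le
        (f := f) (f' := g) (s := Set.Icc y' x)
        (fun t _ => (hf t).hasDerivWithinAt) hgb (convex_Icc y' x)
        (Set.left_mem_Icc.2 hy'.2) (Set.right_mem_Icc.2 hy'.2)
      calc ‖f x - f y'‖ ≤ c * ‖x - y'‖ := this
        _ = c * (x - y') := by rw [Real.norm_eq_abs, abs_of_nonneg (by linarith [hy'.2])]
    have hfc : Continuous f := by
      refine continuous_iff_continuousAt.2 fun t => (hf t).continuousAt
    have t1 : Tendsto (fun y' => ‖f x - f y'‖) (𝓝[>] y) (𝓝 ‖f x - f y‖) :=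
      ((continuous_const.sub hfc).norm.tendsto y).mono_left nhdsWithin_le_nhds
    have t2 : Tendsto (fun y' => c * (x - y')) (𝓝[>] y) (𝓝 (c * (x - y))) :=
      ((continuous_const.mul (continuous_const.sub continuous_id)).tendsto y).mono_left
        nhdsWithin_le_nhds
    have hev : ∀ᶠ y' in 𝓝[>] y, ‖f x - f y'‖ ≤ c * (x - y') := by
      filter_upwards [Ioc_mem_nhdsGT_of_mem (Set.mem_Ico.2 ⟨le_refl y, hyx⟩)] with y' hy'
      exact hbound y' hy'
    have hle : ‖f x - f y‖ ≤ c * (x - y) := le_of_tendsto_of_tendsto t1 t2 hev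
    rw [hfZ y hyZ, sub_zero] at hle
    calc ‖f x‖ ≤ c * (x - y) := hle
      _ ≤ c * (x - x₀) := by
        apply mul_le_mul_of_nonneg_left _ hc
        linarith [hy.2.1]

private lemma wkb_key (f g h : ℝ → ℂ) (Z : Set ℝ) (hZ : IsClosed Z)
    (hf : ∀ x, HasDerivAt f (g x) x) (hh : Continuous h)
    (hfZ : ∀ x ∈ Z, f x = 0) (hhZ : ∀ x ∈ Z, h x = 0)
    (hgh : ∀ x ∉ Z, g x = h x) : ∀ x₀, g x₀ = h x₀ := by
  intro x₀
  by_cases hx₀ : x₀ ∈ Z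
  · have hder0 : HasDerivAt f 0 x₀ := by
      rw [hasDerivAt_iff_isLittleO, Asymptotics.isLittleO_iff]
      intro c hc
      have hcont : ∀ᶠ t in 𝓝 x₀, ‖h t‖ ≤ c := by
        have ht : Tendsto (fun t => ‖h t‖) (𝓝 x₀) (𝓝 ‖h x₀‖) := (hh.norm.tendsto x₀)
        rw [hhZ x₀ hx₀, norm_zero] at ht
        exact ht.eventually (eventually_le_nhds hc)
      obtain ⟨δ, hδpos, hδ⟩ := Metric.eventually_nhds_iff.1 hcont
      filter_upwards [Metric.ball_mem_nhds x₀ hδpos] with x hx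
      simp only [smul_zero, sub_zero, hfZ x₀ hx₀]
      have hgb : ∀ t, t ∉ Z → t ∈ Set.uIcc x₀ x → ‖g t‖ ≤ c := by
        intro t htZ htI
        rw [hgh t htZ]
        apply hδ
        rw [Real.dist_eq]
        rw [Metric.mem_ball, Real.dist_eq] at hx
        rw [Set.mem_uIcc] at htI
        rcases htI with ⟨h1, h2⟩ | ⟨h1, h2⟩ <;> rw [abs_lt] at hx ⊢ <;>
          constructor <;> linarith
      rcases le_total x₀ x with hle | hle
      · have := wkb_key_aux f g Z hZ c (le_of_lt hc) hf hfZ x₀ x hx₀ hle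
          (fun t htZ htI => hgb t htZ (by rw [Set.uIcc_of_le hle]; exact htI))
        calc ‖f x‖ ≤ c * (x - x₀) := this
          _ ≤ c * ‖x - x₀‖ := by
            apply mul_le_mul_of_nonneg_left _ (le_of_lt hc)
            exact le_abs_self _
      · -- reflect
        have hf' : ∀ t, HasDerivAt (fun u => f (-u)) (-(g (-t))) t := by
          intro t
          have := HasDerivAt.comp_const_sub (f := f) (f' := g (0 - t)) 0 t (hf (0 - t))
          simpa [zero_sub] using this
        have hZ' : IsClosed (Neg.neg ⁻¹' Z : Set ℝ) := hZ.preimage continuous_neg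
        have := wkb_key_aux (fun u => f (-u)) (fun t => -(g (-t))) (Neg.neg ⁻¹' Z) hZ'
          c (le_of_lt hc) hf'
          (fun t ht => hfZ (-t) ht) (-x₀) (-x) (by simpa using hx₀) (by linarith)
          (by
            intro t htZ htI
            rw [norm_neg]
            apply hgb (-t) htZ
            rw [Set.mem_uIcc]
            rcases htI with ⟨h1, h2⟩
            right
            constructor <;> linarith)
        simp only [neg_neg] at this
        calc ‖f x‖ ≤ c * (-x - -x₀) := this
          _ ≤ c * ‖x - x₀‖ := by
            apply mul_le_mul_of_nonneg_left _ (le_of_lt hc)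
            rw [Real.norm_eq_abs]
            have : -x - -x₀ = -(x - x₀) := by ring
            rw [this]
            exact neg_le_abs _
    have : g x₀ = 0 := (hf x₀).unique hder0
    rw [this, hhZ x₀ hx₀]
  · exact hgh x₀ hx₀


private lemma wkb_qsplit (ε : ℂ) (d : ℕ → ℂ) (N : ℕ) :
    ∑ n ∈ range N, ∑ k ∈ range N, ε^((n+1)+(k+1)) * d (n+1) * d (k+1)
    = (∑ n ∈ range (N+1), ∑ j ∈ Finset.Ico 1 (n+1), ε^(n+1) * (d j * d (n+1-j)))
      + ∑ n ∈ Finset.Icc 2 N, ∑ k ∈ Finset.Icc (2+N-n) N, ε^(n+k) * d n * d k := by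
  rw [← Finset.sum_product' (f := fun n k => ε^((n+1)+(k+1)) * d (n+1) * d (k+1))]
  rw [← Finset.sum_filter_add_sum_filter_not (range N ×ˢ range N)
    (fun x => x.1 + x.2 + 2 ≤ N + 1)]
  congr 1
  · -- triangle part
    rw [Finset.sum_sigma' (range (N+1)) (fun n => Finset.Ico 1 (n+1))
      (fun n j => ε^(n+1) * (d j * d (n+1-j)))]
    refine Finset.sum_nbij' (fun x => ⟨x.1 + x.2 + 1, x.1 + 1⟩)
      (fun y => (y.2 - 1, y.1 - y.2)) ?_ ?_ ?_ ?_ ?_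
    · rintro ⟨p, q⟩ hm
      simp only [Finset.mem_filter, Finset.mem_product, Finset.mem_range] at hm
      simp only [Finset.mem_sigma, Finset.mem_range, Finset.mem_Ico]
      omega
    · rintro ⟨n, j⟩ hm
      simp only [Finset.mem_sigma, Finset.mem_range, Finset.mem_Ico] at hm
      simp only [Finset.mem_filter, Finset.mem_product, Finset.mem_range]
      omega
    · rintro ⟨p, q⟩ hm
      simp only [Finset.mem_filter, Finset.mem_product, Finset.mem_range] at hm
      simp only [Prod.mk.injEq]
      omega
    · rintro ⟨n, j⟩ hm
      simp only [Finset.mem_sigma, Finset.mem_range, Finset.mem_Ico] at hm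
      obtain ⟨h1, h2, h3⟩ := hm
      simp only [show j - 1 + (n - j) + 1 = n from by omega,
        show j - 1 + 1 = j from by omega]
    · rintro ⟨p, q⟩ hm
      simp only [Finset.mem_filter, Finset.mem_product, Finset.mem_range] at hm
      rw [show p + q + 1 + 1 - (p + 1) = q + 1 from by omega,
        show p + q + 1 + 1 = (p + 1) + (q + 1) from by omega]
      ring
  · -- upper part
    rw [Finset.sum_sigma' (Finset.Icc 2 N) (fun n => Finset.Icc (2+N-n) N)
      (fun n k => ε^(n+k) * d n * d k)]
    refine Finset.sum_nbij' (fun x => ⟨x.1 + 1, x.2 + 1⟩)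
      (fun y => (y.1 - 1, y.2 - 1)) ?_ ?_ ?_ ?_ ?_
    · rintro ⟨p, q⟩ hm
      simp only [Finset.mem_filter, Finset.mem_product, Finset.mem_range, not_le] at hm
      simp only [Finset.mem_sigma, Finset.mem_Icc]
      omega
    · rintro ⟨n, k⟩ hm
      simp only [Finset.mem_sigma, Finset.mem_Icc] at hm
      simp only [Finset.mem_filter, Finset.mem_product, Finset.mem_range, not_le]
      omega
    · rintro ⟨p, q⟩ hm
      simp only [Prod.mk.injEq]
      omega
    · rintro ⟨n, k⟩ hm
      simp only [Finset.mem_sigma, Finset.mem_Icc] at hm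
      obtain ⟨⟨h1, h2⟩, h3, h4⟩ := hm
      simp only [show n - 1 + 1 = n from by omega, show k - 1 + 1 = k from by omega]
    · rintro ⟨p, q⟩ hm
      rfl

private lemma wkb_sum_identity (ε : ℂ) (d : ℕ → ℂ) (N : ℕ) :
    ∑ n ∈ range (N+1),
      ε^(n+1) * (-2 * d 0 * d (n+1) - ∑ j ∈ Finset.Ico 1 (n+1), d j * d (n+1-j))
    = ε^(N+1) * (-2 * d 0 * d (N+1))
      + (∑ n ∈ Finset.Icc 2 N, ∑ k ∈ Finset.Icc (2+N-n) N, ε^(n+k) * d n * d k)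
      + d 0 ^ 2 - (∑ n ∈ range (N+1), ε^n * d n)^2 := by
  have hsq : (∑ n ∈ range (N+1), ε^n * d n)^2
      = ((∑ n ∈ range N, ∑ k ∈ range N, ε^((n+1)+(k+1)) * d (n+1) * d (k+1))
        + ∑ n ∈ range N, ε^((n+1)+0) * d (n+1) * d 0)
        + ((∑ k ∈ range N, ε^(0+(k+1)) * d 0 * d (k+1))
        + ε^(0+0) * d 0 * d 0) := by
    rw [sq, Finset.sum_mul_sum]
    have hterm : ∀ n k : ℕ, (ε^n * d n) * (ε^k * d k) = ε^(n+k) * d n * d k := by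
      intro n k; rw [pow_add]; ring
    simp only [hterm]
    rw [Finset.sum_range_succ' (fun n => ∑ k ∈ range (N+1), ε^(n+k) * d n * d k) N]
    have inner : ∀ m : ℕ, (∑ k ∈ range (N+1), ε^(m+k) * d m * d k)
        = (∑ k ∈ range N, ε^(m+(k+1)) * d m * d (k+1)) + ε^(m+0) * d m * d 0 :=
      fun m => Finset.sum_range_succ' (fun k => ε^(m+k) * d m * d k) N
    simp only [inner]
    rw [Finset.sum_add_distrib]
  have hlhs : ∑ n ∈ range (N+1),
      ε^(n+1) * (-2 * d 0 * d (n+1) - ∑ j ∈ Finset.Ico 1 (n+1), d j * d (n+1-j))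
      = (∑ n ∈ range (N+1), ε^(n+1) * (-2 * d 0 * d (n+1)))
        - ∑ n ∈ range (N+1), ∑ j ∈ Finset.Ico 1 (n+1), ε^(n+1) * (d j * d (n+1-j)) := by
    rw [← Finset.sum_sub_distrib]
    congr 1 with n
    rw [mul_sub, Finset.mul_sum]
  rw [hlhs, hsq, wkb_qsplit ε d N]
  rw [Finset.sum_range_succ (fun n => ε^(n+1) * (-2 * d 0 * d (n+1))) N]
  have c1 : ∑ n ∈ range N, ε^(n+1) * (-2 * d 0 * d (n+1))
      = -((∑ k ∈ range N, ε^(0+(k+1)) * d 0 * d (k+1))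
          + (∑ n ∈ range N, ε^((n+1)+0) * d (n+1) * d 0)) := by
    rw [← Finset.sum_add_distrib, ← Finset.sum_neg_distrib]
    apply Finset.sum_congr rfl
    intro n _
    simp only [zero_add, add_zero]
    ring
  rw [c1]
  simp only [zero_add, add_zero, pow_zero]
  ring

end WKBAux

/-- Residual of the truncated WKB exponential: if the Sₙ satisfy the WKB
    recurrence up to order N+1, then φ̃_N := exp(Σ_{n=0}^N ε^{n-1}Sₙ)
    satisfies ε²φ̃_N'' + aφ̃_N = φ̃_N f_{N,ε} with
    f_{N,ε} = ε^{N+1}(-2S₀'S_{N+1}') + Σ_{n=2}^N Σ_{k=2+N-n}^N ε^{n+k}Sₙ'S_k'. -/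
theorem wkb_residual
    (a : ℝ → ℂ) (ε : ℝ) (hε : 0 < ε) (N : ℕ)
    (S dS ddS : ℕ → ℝ → ℂ)
    (hS : ∀ n x, HasDerivAt (S n) (dS n x) x)
    (hdS : ∀ n x, HasDerivAt (dS n) (ddS n x) x)
    (h0 : ∀ x, (dS 0 x) ^ 2 + a x = 0)
    (hrec : ∀ n, 1 ≤ n → n ≤ N + 1 → ∀ x,
      dS n x = -(1 / (2 * dS 0 x)) *
        ((∑ j ∈ Finset.Ico 1 n, dS j x * dS (n - j) x) + ddS (n - 1) x)) :
    ∀ x : ℝ,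
      (ε : ℂ) ^ 2 *
          deriv (deriv (fun y =>
            Complex.exp (∑ n ∈ Finset.range (N + 1),
              (ε : ℂ) ^ ((n : ℤ) - 1) * S n y))) x
        + a x * Complex.exp (∑ n ∈ Finset.range (N + 1),
            (ε : ℂ) ^ ((n : ℤ) - 1) * S n x)
      = Complex.exp (∑ n ∈ Finset.range (N + 1),
            (ε : ℂ) ^ ((n : ℤ) - 1) * S n x) *
          ((ε : ℂ) ^ (N + 1) * (-2 * dS 0 x * dS (N + 1) x) +
            ∑ n ∈ Finset.Icc 2 N, ∑ k ∈ Finset.Icc (2 + N - n) N,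
              (ε : ℂ) ^ (n + k) * dS n x * dS k x) := by
  have hεC : (ε : ℂ) ≠ 0 := Complex.ofReal_ne_zero.mpr (ne_of_gt hε)
  have hc : ∀ n : ℕ, Continuous (dS n) :=
    fun n => continuous_iff_continuousAt.2 fun x => (hdS n x).continuousAt
  have hvanish : ∀ x : ℝ, dS 0 x = 0 → ∀ n, 1 ≤ n → n ≤ N + 1 → dS n x = 0 := by
    intro x hx n h1 h2
    rw [hrec n h1 h2 x, hx]
    simp
  have hdd : ∀ x : ℝ, dS 0 x ≠ 0 → ∀ n, n ≤ N →
      ddS n x = -2 * dS 0 x * dS (n+1) x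
        - ∑ j ∈ Finset.Ico 1 (n+1), dS j x * dS (n+1-j) x := by
    intro x hx n hn
    have h1 := hrec (n+1) (by omega) (by omega) x
    simp only [Nat.add_sub_cancel] at h1
    have h2 : (2 : ℂ) * dS 0 x ≠ 0 := by
      simp [hx]
    have h3 : -2 * dS 0 x * dS (n+1) x
        = (∑ j ∈ Finset.Ico 1 (n+1), dS j x * dS (n+1-j) x) + ddS n x := by
      rw [h1]
      field_simp
    linear_combination -h3
  -- key application
  have hZc : IsClosed (dS 0 ⁻¹' {0} : Set ℝ) := isClosed_singleton.preimage (hc 0)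
  have hkey : ∀ x : ℝ,
      (∑ n ∈ range (N+1), (ε:ℂ)^(n+1) * ddS n x)
      = (ε:ℂ)^(N+1) * (-2 * dS 0 x * dS (N+1) x)
        + (∑ n ∈ Finset.Icc 2 N, ∑ k ∈ Finset.Icc (2+N-n) N,
            (ε:ℂ)^(n+k) * dS n x * dS k x)
        + (dS 0 x)^2 - (∑ n ∈ range (N+1), (ε:ℂ)^n * dS n x)^2 := by
    have := wkb_key
      (fun x => ∑ n ∈ range (N+1), (ε:ℂ)^(n+1) * dS n x)
      (fun x => ∑ n ∈ range (N+1), (ε:ℂ)^(n+1) * ddS n x)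
      (fun x => (ε:ℂ)^(N+1) * (-2 * dS 0 x * dS (N+1) x)
        + (∑ n ∈ Finset.Icc 2 N, ∑ k ∈ Finset.Icc (2+N-n) N,
            (ε:ℂ)^(n+k) * dS n x * dS k x)
        + (dS 0 x)^2 - (∑ n ∈ range (N+1), (ε:ℂ)^n * dS n x)^2)
      (dS 0 ⁻¹' {0}) hZc
      (fun x => HasDerivAt.fun_sum fun n _ => (hdS n x).const_mul _)
      (by
        apply Continuous.sub
        apply Continuous.add
        apply Continuous.add
        · exact continuous_const.mul ((continuous_const.mul (hc 0)).mul (hc (N+1)))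
        · exact continuous_finset_sum _ fun n _ => continuous_finset_sum _ fun k _ =>
            (continuous_const.mul (hc n)).mul (hc k)
        · exact (hc 0).pow 2
        · exact (continuous_finset_sum _ fun n _ => continuous_const.mul (hc n)).pow 2)
      (by
        intro x hx
        rw [Set.mem_preimage, Set.mem_singleton_iff] at hx
        apply Finset.sum_eq_zero
        intro n hn
        rcases Nat.eq_zero_or_pos n with rfl | hpos
        · rw [hx, mul_zero]
        · rw [hvanish x hx n hpos (by simp only [Finset.mem_range] at hn; omega), mul_zero])
      (by
        intro x hx
        rw [Set.mem_preimage, Set.mem_singleton_iff] at hx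
        have e1 : dS (N+1) x = 0 := hvanish x hx (N+1) (by omega) (by omega)
        have e2 : ∀ n ∈ Finset.Icc 2 N, ∀ k ∈ Finset.Icc (2+N-n) N,
            (ε:ℂ)^(n+k) * dS n x * dS k x = 0 := by
          intro n hn k hk
          simp only [Finset.mem_Icc] at hn
          rw [hvanish x hx n (by omega) (by omega), mul_zero, zero_mul]
        have e3 : (∑ n ∈ range (N+1), (ε:ℂ)^n * dS n x) = 0 := by
          apply Finset.sum_eq_zero
          intro n hn
          rcases Nat.eq_zero_or_pos n with rfl | hpos
          · rw [hx, mul_zero]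
          · rw [hvanish x hx n hpos (by simp only [Finset.mem_range] at hn; omega), mul_zero]
        show (ε:ℂ)^(N+1) * (-2 * dS 0 x * dS (N+1) x)
          + (∑ n ∈ Finset.Icc 2 N, ∑ k ∈ Finset.Icc (2+N-n) N,
              (ε:ℂ)^(n+k) * dS n x * dS k x)
          + (dS 0 x)^2 - (∑ n ∈ range (N+1), (ε:ℂ)^n * dS n x)^2 = 0
        rw [e1, hx, e3]
        rw [Finset.sum_congr rfl (fun n hn => Finset.sum_eq_zero (e2 n hn))]
        simp)
      (by
        intro x hx
        rw [Set.mem_preimage, Set.mem_singleton_iff] at hx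
        calc (∑ n ∈ range (N+1), (ε:ℂ)^(n+1) * ddS n x)
            = ∑ n ∈ range (N+1), (ε:ℂ)^(n+1) *
                (-2 * dS 0 x * dS (n+1) x
                  - ∑ j ∈ Finset.Ico 1 (n+1), dS j x * dS (n+1-j) x) := by
              apply Finset.sum_congr rfl
              intro n hn
              rw [hdd x hx n (by simp only [Finset.mem_range] at hn; omega)]
          _ = _ := wkb_sum_identity (ε:ℂ) (fun j => dS j x) N)
    exact this
  -- derivative computation
  intro x
  have hD : ∀ y : ℝ, HasDerivAt
      (fun y => ∑ n ∈ Finset.range (N+1), (ε:ℂ)^((n:ℤ)-1) * S n y)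
      (∑ n ∈ Finset.range (N+1), (ε:ℂ)^((n:ℤ)-1) * dS n y) y :=
    fun y => HasDerivAt.fun_sum fun n _ => (hS n y).const_mul _
  have hExp : ∀ y : ℝ, HasDerivAt
      (fun y => Complex.exp (∑ n ∈ Finset.range (N+1), (ε:ℂ)^((n:ℤ)-1) * S n y))
      (Complex.exp (∑ n ∈ Finset.range (N+1), (ε:ℂ)^((n:ℤ)-1) * S n y) *
        (∑ n ∈ Finset.range (N+1), (ε:ℂ)^((n:ℤ)-1) * dS n y)) y :=
    fun y => (hD y).cexp
  have hderiv1 : deriv (fun y =>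
      Complex.exp (∑ n ∈ Finset.range (N+1), (ε:ℂ)^((n:ℤ)-1) * S n y))
      = fun y => Complex.exp (∑ n ∈ Finset.range (N+1), (ε:ℂ)^((n:ℤ)-1) * S n y) *
        (∑ n ∈ Finset.range (N+1), (ε:ℂ)^((n:ℤ)-1) * dS n y) :=
    funext fun y => (hExp y).deriv
  rw [hderiv1]
  have hD2 : HasDerivAt
      (fun y => ∑ n ∈ Finset.range (N+1), (ε:ℂ)^((n:ℤ)-1) * dS n y)
      (∑ n ∈ Finset.range (N+1), (ε:ℂ)^((n:ℤ)-1) * ddS n x) x :=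
    HasDerivAt.fun_sum fun n _ => (hdS n x).const_mul _
  have hprod := (hExp x).fun_mul hD2
  rw [hprod.deriv]
  -- scalar identity
  have ha : a x = -(dS 0 x)^2 := by linear_combination h0 x
  have hε1 : ∀ n : ℕ, (ε:ℂ) * (ε:ℂ)^((n:ℤ)-1) = (ε:ℂ)^n := by
    intro n
    have h1 : (ε:ℂ) * (ε:ℂ)^((n:ℤ)-1) = (ε:ℂ)^((1:ℤ) + ((n:ℤ)-1)) := by
      rw [zpow_add₀ hεC, zpow_one]
    rw [h1, show (1:ℤ) + ((n:ℤ)-1) = (n:ℤ) from by ring, zpow_natCast]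
  have hε2 : ∀ n : ℕ, (ε:ℂ)^2 * (ε:ℂ)^((n:ℤ)-1) = (ε:ℂ)^(n+1) := by
    intro n
    have h1 : (ε:ℂ)^(2:ℕ) * (ε:ℂ)^((n:ℤ)-1) = (ε:ℂ)^((2:ℤ) + ((n:ℤ)-1)) := by
      rw [zpow_add₀ hεC, show ((2:ℤ)) = ((2:ℕ):ℤ) from by norm_num, zpow_natCast]
    rw [h1, show (2:ℤ) + ((n:ℤ)-1) = ((n+1:ℕ):ℤ) from by push_cast; ring, zpow_natCast]
  have hεD : (ε:ℂ) * (∑ n ∈ Finset.range (N+1), (ε:ℂ)^((n:ℤ)-1) * dS n x)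
      = ∑ n ∈ range (N+1), (ε:ℂ)^n * dS n x := by
    rw [Finset.mul_sum]
    exact Finset.sum_congr rfl fun n _ => by rw [← mul_assoc, hε1]
  have hDD : (ε:ℂ)^2 * (∑ n ∈ Finset.range (N+1), (ε:ℂ)^((n:ℤ)-1) * ddS n x)
      = ∑ n ∈ range (N+1), (ε:ℂ)^(n+1) * ddS n x := by
    rw [Finset.mul_sum]
    exact Finset.sum_congr rfl fun n _ => by rw [← mul_assoc, hε2]
  linear_combination
    (Complex.exp (∑ n ∈ Finset.range (N+1), (ε:ℂ)^((n:ℤ)-1) * S n x)) *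
      ((hkey x) + ha + hDD +
        ((ε:ℂ) * (∑ n ∈ Finset.range (N+1), (ε:ℂ)^((n:ℤ)-1) * dS n x)
          + ∑ n ∈ range (N+1), (ε:ℂ)^n * dS n x) * hεD)
end

section
/- Let K₂ > 0, c ∈ (0,e), ε ∈ (0, c/(eK₂)], and set N := ⌊c/(eK₂ε)⌋ - 1. Then ε^N K₂^{N+1}(N+1)^{N+1} ≤ (e/(cε)) exp(-r̃/ε), where r̃ = c ln(e/c)/(eK₂) > 0. -/
/-- Exponential smallness of the leading residual term at the near-optimal
    truncation order N = ⌊c/(eK₂ε)⌋ - 1: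
    ε^N K₂^{N+1}(N+1)^{N+1} ≤ (e/(cε)) exp(-r̃/ε) with
    r̃ = c ln(e/c)/(eK₂). -/
theorem near_optimal_term_exp_small
    (K₂ c ε : ℝ) (hK₂ : 0 < K₂) (hc0 : 0 < c) (hce : c < Real.exp 1)
    (hε : 0 < ε) (hεle : ε ≤ c / (Real.exp 1 * K₂))
    (N : ℕ) (hN : N = Nat.floor (c / (Real.exp 1 * K₂ * ε)) - 1) :
    ε ^ N * K₂ ^ (N + 1) * ((N : ℝ) + 1) ^ (N + 1)
      ≤ (Real.exp 1 / (c * ε)) *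
        Real.exp (-(c * Real.log (Real.exp 1 / c) / (Real.exp 1 * K₂)) / ε) := by
  set e := Real.exp 1 with he
  have he0 : (0:ℝ) < e := Real.exp_pos 1
  set x := c / (e * K₂ * ε) with hxdef
  have hx0 : 0 < x := by positivity
  have hx1 : 1 ≤ x := by
    rw [hxdef, le_div_iff₀ (by positivity)]
    have := mul_le_mul_of_nonneg_left hεle (by positivity : (0:ℝ) ≤ e * K₂)
    calc 1 * (e * K₂ * ε) = e * K₂ * ε := one_mul _
      _ ≤ e * K₂ * (c / (e * K₂)) := this
      _ = c := by field_simp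
  set M := Nat.floor x with hM
  have hM1 : 1 ≤ M := by
    rw [hM]
    exact Nat.one_le_floor_iff x |>.mpr hx1
  have hNM : N + 1 = M := by omega
  have hMle : (M:ℝ) ≤ x := Nat.floor_le hx0.le
  have hMge : x - 1 ≤ (M:ℝ) := by
    have := Nat.lt_floor_add_one x
    push_cast at this ⊢
    linarith
  have hb0 : (0:ℝ) < c / e := by positivity
  have hb1 : c / e < 1 := (div_lt_one he0).mpr hce
  have key : ε * K₂ * ((N:ℝ) + 1) ≤ c / e := by
    have hNr : ((N:ℝ) + 1) = (M:ℝ) := by exact_mod_cast congrArg (Nat.cast (R := ℝ)) hNM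
    rw [hNr]
    have : (M:ℝ) ≤ c / (e * K₂ * ε) := hMle
    rw [le_div_iff₀ (by positivity)] at this
    rw [le_div_iff₀ he0]
    nlinarith [this]
  have step1 : ε ^ N * K₂ ^ (N + 1) * ((N : ℝ) + 1) ^ (N + 1)
      = (ε * K₂ * ((N:ℝ) + 1)) ^ (N + 1) / ε := by
    rw [mul_pow, mul_pow, pow_succ]
    field_simp
    ring
  have step2 : (ε * K₂ * ((N:ℝ) + 1)) ^ (N + 1) ≤ (c / e) ^ (N + 1) := by
    apply pow_le_pow_left₀ (by positivity) key
  have hNr : ((N:ℝ) + 1) = (M:ℝ) := by exact_mod_cast congrArg (Nat.cast (R := ℝ)) hNM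
  have step3 : (c / e) ^ (N + 1) ≤ (e / c) * Real.exp (x * Real.log (c / e)) := by
    have h1 : ((c / e) ^ (N + 1) : ℝ) = (c / e) ^ ((M:ℝ)) := by
      rw [hNM]
      rw [Real.rpow_natCast]
    rw [h1]
    have h2 : (c / e) ^ ((M:ℝ)) ≤ (c / e) ^ (x - 1) :=
      Real.rpow_le_rpow_of_exponent_ge hb0 hb1.le hMge
    have h3 : (c / e) ^ (x - 1) = (e / c) * Real.exp (x * Real.log (c / e)) := by
      rw [Real.rpow_sub hb0, Real.rpow_one, Real.rpow_def_of_pos hb0]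
      rw [mul_comm (Real.log (c/e)) x]
      rw [div_div_eq_mul_div, mul_comm]
      field_simp
    linarith [h3 ▸ h2]
  have hexp : x * Real.log (c / e) = -(c * Real.log (e / c) / (e * K₂)) / ε := by
    have hlc : Real.log (c / e) = Real.log c - 1 := by
      rw [Real.log_div hc0.ne' he0.ne', he, Real.log_exp]
    have hec : Real.log (e / c) = 1 - Real.log c := by
      rw [Real.log_div he0.ne' hc0.ne', he, Real.log_exp]
    rw [hlc, hec, hxdef]
    field_simp
    ring
  rw [step1, ← hexp]
  rw [div_le_iff₀ hε] at *
  calc (ε * K₂ * ((N:ℝ) + 1)) ^ (N + 1)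
      ≤ (e / c) * Real.exp (x * Real.log (c / e)) := le_trans step2 step3
    _ = e / (c * ε) * Real.exp (x * Real.log (c / e)) * ε := by
        field_simp
end

section
/- Let K₂ > 0, c ∈ (0,e), ε > 0 and N ∈ ℕ with N ≥ 2 and εK₂N ≤ c/e. Then Σ_{n=2}^N Σ_{k=2+N-n}^N ε^{n+k-1} K₂^{n+k} nⁿ k^k ≤ (1/ε)(εK₂N)^{N+2} (N-1)/(1 - c/e). -/
/-- Bound on the double sum in the residual estimate: for N ≥ 2 with
    εK₂N ≤ c/e,
    Σ_{n=2}^N Σ_{k=2+N-n}^N ε^{n+k-1}K₂^{n+k}nⁿk^k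
      ≤ (1/ε)(εK₂N)^{N+2}(N-1)/(1-c/e). -/
theorem double_sum_residual_bound
    (K₂ c ε : ℝ) (hK₂ : 0 < K₂) (hc0 : 0 < c) (hce : c < Real.exp 1)
    (hε : 0 < ε) (N : ℕ) (hN : 2 ≤ N)
    (hsmall : ε * K₂ * (N : ℝ) ≤ c / Real.exp 1) :
    (∑ n ∈ Finset.Icc 2 N, ∑ k ∈ Finset.Icc (2 + N - n) N,
        ε ^ (n + k - 1) * K₂ ^ (n + k) * (n : ℝ) ^ n * (k : ℝ) ^ k)
      ≤ (1 / ε) * (ε * K₂ * (N : ℝ)) ^ (N + 2) * ((N : ℝ) - 1) /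
          (1 - c / Real.exp 1) := by
  have he0 : 0 < Real.exp 1 := Real.exp_pos 1
  have hce1 : c / Real.exp 1 < 1 := (div_lt_one he0).mpr hce
  have hden : 0 < 1 - c / Real.exp 1 := by linarith
  set q := ε * K₂ * (N : ℝ) with hqdef
  have hNpos : (0:ℝ) < N := by
    have : (0:ℕ) < N := by omega
    exact_mod_cast this
  have hq0 : 0 < q := by positivity
  have hq1 : q < 1 := lt_of_le_of_lt hsmall hce1
  have hqle : q ≤ c / Real.exp 1 := hsmall
  -- inner sum bound
  have inner : ∀ n ∈ Finset.Icc 2 N,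
      (∑ k ∈ Finset.Icc (2 + N - n) N,
        ε ^ (n + k - 1) * K₂ ^ (n + k) * (n : ℝ) ^ n * (k : ℝ) ^ k)
      ≤ (1/ε) * q ^ (N + 2) * (1 - c / Real.exp 1)⁻¹ := by
    intro n hn
    simp only [Finset.mem_Icc] at hn
    -- termwise bound
    have step1 : (∑ k ∈ Finset.Icc (2 + N - n) N,
        ε ^ (n + k - 1) * K₂ ^ (n + k) * (n : ℝ) ^ n * (k : ℝ) ^ k)
        ≤ ∑ k ∈ Finset.Icc (2 + N - n) N, (1/ε) * q ^ (n + k) := by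
      apply Finset.sum_le_sum
      intro k hk
      simp only [Finset.mem_Icc] at hk
      have hk1 : 1 ≤ n + k := by omega
      have hεpow : ε ^ (n + k - 1) = (1/ε) * ε ^ (n + k) := by
        have : ε ^ (n + k) = ε ^ (n + k - 1) * ε := by
          rw [← pow_succ]
          congr 1
          omega
        rw [this]
        field_simp
      have hq : q ^ (n + k) = ε ^ (n + k) * K₂ ^ (n + k) * ((N:ℝ) ^ n * (N:ℝ) ^ k) := by
        rw [hqdef, mul_pow, mul_pow, ← pow_add]
      have hnk : (n:ℝ) ^ n * (k:ℝ) ^ k ≤ (N:ℝ) ^ n * (N:ℝ) ^ k := by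
        apply mul_le_mul
        · exact pow_le_pow_left₀ (by positivity) (by exact_mod_cast hn.2) n
        · exact pow_le_pow_left₀ (by positivity) (by exact_mod_cast hk.2) k
        · positivity
        · positivity
      have h1 : 0 ≤ (1/ε) * ε ^ (n + k) * K₂ ^ (n + k) := by positivity
      calc ε ^ (n + k - 1) * K₂ ^ (n + k) * (n : ℝ) ^ n * (k : ℝ) ^ k
          = (1/ε) * ε ^ (n + k) * K₂ ^ (n + k) * ((n:ℝ) ^ n * (k:ℝ) ^ k) := by
            rw [hεpow]; ring
        _ ≤ (1/ε) * ε ^ (n + k) * K₂ ^ (n + k) * ((N:ℝ) ^ n * (N:ℝ) ^ k) :=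
            mul_le_mul_of_nonneg_left hnk h1
        _ = (1/ε) * (ε ^ (n + k) * K₂ ^ (n + k) * ((N:ℝ) ^ n * (N:ℝ) ^ k)) := by ring
        _ = (1/ε) * q ^ (n + k) := by rw [hq]
    refine step1.trans ?_
    rw [← Finset.mul_sum]
    have hsum : (∑ k ∈ Finset.Icc (2 + N - n) N, q ^ (n + k))
        ≤ q ^ (N + 2) * (1 - c / Real.exp 1)⁻¹ := by
      have ha : n + (2 + N - n) = N + 2 := by omega
      rw [← Finset.Ico_add_one_right_eq_Icc, Finset.sum_Ico_eq_sum_range]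
      have : ∀ i ∈ Finset.range (N + 1 - (2 + N - n)), q ^ (n + (2 + N - n + i))
          = q ^ (N + 2) * q ^ i := by
        intro i _
        rw [← pow_add]
        congr 1
        omega
      rw [Finset.sum_congr rfl this, ← Finset.mul_sum]
      apply mul_le_mul_of_nonneg_left _ (by positivity)
      have hgeom : (∑ i ∈ Finset.range (N + 1 - (2 + N - n)), q ^ i) ≤ (1 - q)⁻¹ := by
        have hsummable : Summable (fun i : ℕ => q ^ i) :=
          summable_geometric_of_lt_one hq0.le hq1
        calc (∑ i ∈ Finset.range (N + 1 - (2 + N - n)), q ^ i)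
            ≤ ∑' i : ℕ, q ^ i := Summable.sum_le_tsum _ (fun i _ => by positivity) hsummable
          _ = (1 - q)⁻¹ := tsum_geometric_of_lt_one hq0.le hq1
      refine hgeom.trans ?_
      apply inv_anti₀ hden
      linarith
    calc (1/ε) * ∑ k ∈ Finset.Icc (2 + N - n) N, q ^ (n + k)
        ≤ (1/ε) * (q ^ (N + 2) * (1 - c / Real.exp 1)⁻¹) :=
          mul_le_mul_of_nonneg_left hsum (by positivity)
      _ = (1/ε) * q ^ (N + 2) * (1 - c / Real.exp 1)⁻¹ := by ring
  calc (∑ n ∈ Finset.Icc 2 N, ∑ k ∈ Finset.Icc (2 + N - n) N,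
        ε ^ (n + k - 1) * K₂ ^ (n + k) * (n : ℝ) ^ n * (k : ℝ) ^ k)
      ≤ ∑ n ∈ Finset.Icc 2 N, (1/ε) * q ^ (N + 2) * (1 - c / Real.exp 1)⁻¹ :=
        Finset.sum_le_sum inner
    _ = ((N:ℝ) - 1) * ((1/ε) * q ^ (N + 2) * (1 - c / Real.exp 1)⁻¹) := by
        rw [Finset.sum_const, Nat.card_Icc, nsmul_eq_mul]
        have : ((N + 1 - 2 : ℕ) : ℝ) = (N:ℝ) - 1 := by
          have h : (N + 1 - 2 : ℕ) = N - 1 := by omega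
          rw [h, Nat.cast_sub (by omega), Nat.cast_one]
        rw [this]
    _ = (1 / ε) * q ^ (N + 2) * ((N : ℝ) - 1) / (1 - c / Real.exp 1) := by
        field_simp
end
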